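/- arXiv:0810.4502 — 7 statements merged into one kernel-verified Lean document; each statement's English description precedes it below -/
import Mathlib

section
/- Let F : C → Ab be a reduced functor (F(0) = 0). Then for all objects X₁, …, Xₙ of C there is a natural decomposition F(X₁ ∨ … ∨ Xₙ) ≅ ⊕_{k=1}^{n} ⊕_{1 ≤ i₁ < … < i_k ≤ n} cr_kF(X_{i₁}, …, X_{i_k}). -/
open CategoryTheory Limits ZeroObject
open scoped TensorProduct

set_option linter.unusedSectionVars false

universe w v u

namespace QF

variable {C : Type u} [Category.{v} C] [HasZeroObject C] [HasZeroMorphisms C]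
  [HasBinaryCoproducts C]

noncomputable section

/-- The first canonical retraction `r₁ : X ∨ Y ⟶ X` (identity on `X`, zero on `Y`). -/
def r1 (X Y : C) : (X ⨿ Y) ⟶ X := coprod.desc (𝟙 X) 0

/-- The second canonical retraction `r₂ : X ∨ Y ⟶ Y` (zero on `X`, identity on `Y`). -/
def r2 (X Y : C) : (X ⨿ Y) ⟶ Y := coprod.desc 0 (𝟙 Y)

/-- The fold (codiagonal) map `∇² : X ∨ X ⟶ X`. -/
def fold (X : C) : (X ⨿ X) ⟶ X := coprod.desc (𝟙 X) (𝟙 X)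

/-- A functor `F : C ⥤ Ab` is *reduced* if `F(0) = 0`. -/
def Reduced (F : C ⥤ AddCommGrpCat.{w}) : Prop := Subsingleton (F.obj (0 : C))

/-- The second cross-effect `cr₂F(X,Y) = ker((F(r₁),F(r₂)) : F(X∨Y) → F(X) × F(Y))`,
as a subgroup of `F(X ∨ Y)`. -/
def cr2sub (F : C ⥤ AddCommGrpCat.{w}) (X Y : C) : AddSubgroup (F.obj (X ⨿ Y)) :=
  AddMonoidHom.ker (show (F.obj (X ⨿ Y) : Type w) →+ F.obj X from (F.map (r1 X Y)).hom) ⊓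
  AddMonoidHom.ker (show (F.obj (X ⨿ Y) : Type w) →+ F.obj Y from (F.map (r2 X Y)).hom)

lemma mem_cr2sub {F : C ⥤ AddCommGrpCat.{w}} {X Y : C} {z : F.obj (X ⨿ Y)} :
    z ∈ cr2sub F X Y ↔ F.map (r1 X Y) z = 0 ∧ F.map (r2 X Y) z = 0 := Iff.rfl

lemma fmap_comp_apply (F : C ⥤ AddCommGrpCat.{w}) {X Y Z : C} (f : X ⟶ Y) (g : Y ⟶ Z)
    (x : F.obj X) : F.map (f ≫ g) x = F.map g (F.map f x) := by rw [F.map_comp]; rfl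

lemma map_comp_r1 {X X' : C} (f : X ⟶ X') (Y : C) :
    coprod.map f (𝟙 Y) ≫ r1 X' Y = r1 X Y ≫ f := by
  apply coprod.hom_ext <;> simp [r1]

lemma map_comp_r2 {X X' : C} (f : X ⟶ X') (Y : C) :
    coprod.map f (𝟙 Y) ≫ r2 X' Y = r2 X Y := by
  apply coprod.hom_ext <;> simp [r2]

lemma map_comp_r1' (X : C) {Y Y' : C} (f : Y ⟶ Y') :
    coprod.map (𝟙 X) f ≫ r1 X Y' = r1 X Y := by
  apply coprod.hom_ext <;> simp [r1]

lemma map_comp_r2' (X : C) {Y Y' : C} (f : Y ⟶ Y') :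
    coprod.map (𝟙 X) f ≫ r2 X Y' = r2 X Y ≫ f := by
  apply coprod.hom_ext <;> simp [r2]

lemma cr2sub_map {F : C ⥤ AddCommGrpCat.{w}} {X X' Y : C} (f : X ⟶ X') {z : F.obj (X ⨿ Y)}
    (hz : z ∈ cr2sub F X Y) : F.map (coprod.map f (𝟙 Y)) z ∈ cr2sub F X' Y := by
  refine ⟨?_, ?_⟩
  · show F.map (r1 X' Y) (F.map (coprod.map f (𝟙 Y)) z) = 0
    rw [← fmap_comp_apply, map_comp_r1, fmap_comp_apply]
    rw [show F.map (r1 X Y) z = 0 from hz.1, map_zero]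
  · show F.map (r2 X' Y) (F.map (coprod.map f (𝟙 Y)) z) = 0
    rw [← fmap_comp_apply, map_comp_r2]
    exact hz.2

/-- The second cross-effect as a functor in the first variable: `X ↦ cr₂F(X,Y)`. -/
def cr2Fun (F : C ⥤ AddCommGrpCat.{w}) (Y : C) : C ⥤ AddCommGrpCat.{w} where
  obj X := AddCommGrpCat.of (cr2sub F X Y)
  map {X X'} f := AddCommGrpCat.ofHom <|
    AddMonoidHom.codRestrict
      ((show (F.obj (X ⨿ Y) : Type w) →+ F.obj (X' ⨿ Y) from (F.map (coprod.map f (𝟙 Y))).hom).comp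
        (cr2sub F X Y).subtype)
      (cr2sub F X' Y) (fun z => cr2sub_map f z.2)
  map_id X := by
    ext z
    show F.map (coprod.map (𝟙 X) (𝟙 Y)) z.1 = z.1
    rw [show coprod.map (𝟙 X) (𝟙 Y) = 𝟙 (X ⨿ Y) by apply coprod.hom_ext <;> simp]
    rw [F.map_id]; rfl
  map_comp {X X' X''} f g := by
    ext z
    show F.map (coprod.map (f ≫ g) (𝟙 Y)) z.1 =
      F.map (coprod.map g (𝟙 Y)) (F.map (coprod.map f (𝟙 Y)) z.1)
    rw [show coprod.map (f ≫ g) (𝟙 Y) = coprod.map f (𝟙 Y) ≫ coprod.map g (𝟙 Y) by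
      apply coprod.hom_ext <;> simp]
    rw [fmap_comp_apply]

lemma cr2sub_map' {F : C ⥤ AddCommGrpCat.{w}} {X Y Y' : C} (f : Y ⟶ Y') {z : F.obj (X ⨿ Y)}
    (hz : z ∈ cr2sub F X Y) : F.map (coprod.map (𝟙 X) f) z ∈ cr2sub F X Y' := by
  refine ⟨?_, ?_⟩
  · show F.map (r1 X Y') (F.map (coprod.map (𝟙 X) f) z) = 0
    rw [← fmap_comp_apply, map_comp_r1']
    exact hz.1
  · show F.map (r2 X Y') (F.map (coprod.map (𝟙 X) f) z) = 0
    rw [← fmap_comp_apply, map_comp_r2', fmap_comp_apply]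
    rw [show F.map (r2 X Y) z = 0 from hz.2, map_zero]

/-- The second cross-effect as a functor in the second variable: `Y ↦ cr₂F(X,Y)`. -/
def cr2FunR (F : C ⥤ AddCommGrpCat.{w}) (X : C) : C ⥤ AddCommGrpCat.{w} where
  obj Y := AddCommGrpCat.of (cr2sub F X Y)
  map {Y Y'} f := AddCommGrpCat.ofHom <|
    AddMonoidHom.codRestrict
      ((show (F.obj (X ⨿ Y) : Type w) →+ F.obj (X ⨿ Y') from (F.map (coprod.map (𝟙 X) f)).hom).comp
        (cr2sub F X Y).subtype)
      (cr2sub F X Y') (fun z => cr2sub_map' f z.2)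
  map_id Y := by
    ext z
    show F.map (coprod.map (𝟙 X) (𝟙 Y)) z.1 = z.1
    rw [show coprod.map (𝟙 X) (𝟙 Y) = 𝟙 (X ⨿ Y) by apply coprod.hom_ext <;> simp]
    rw [F.map_id]; rfl
  map_comp {Y Y' Y''} f g := by
    ext z
    show F.map (coprod.map (𝟙 X) (f ≫ g)) z.1 =
      F.map (coprod.map (𝟙 X) g) (F.map (coprod.map (𝟙 X) f) z.1)
    rw [show coprod.map (𝟙 X) (f ≫ g) = coprod.map (𝟙 X) f ≫ coprod.map (𝟙 X) g by
      apply coprod.hom_ext <;> simp]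
    rw [fmap_comp_apply]

/-- The first cross-effect `cr₁F(X) = ker(F(X) → F(0))` as a subgroup of `F(X)`. -/
def cr1sub (F : C ⥤ AddCommGrpCat.{w}) (X : C) : AddSubgroup (F.obj X) :=
  AddMonoidHom.ker (show (F.obj X : Type w) →+ F.obj (0 : C) from (F.map (0 : X ⟶ 0)).hom)

lemma cr1sub_map {F : C ⥤ AddCommGrpCat.{w}} {X X' : C} (f : X ⟶ X') {z : F.obj X}
    (hz : z ∈ cr1sub F X) : F.map f z ∈ cr1sub F X' := by
  show F.map (0 : X' ⟶ 0) (F.map f z) = 0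
  rw [← fmap_comp_apply, comp_zero]
  exact hz

/-- The first cross-effect as a functor `X ↦ cr₁F(X)`. -/
def cr1Fun (F : C ⥤ AddCommGrpCat.{w}) : C ⥤ AddCommGrpCat.{w} where
  obj X := AddCommGrpCat.of (cr1sub F X)
  map {X X'} f := AddCommGrpCat.ofHom <|
    AddMonoidHom.codRestrict
      ((show (F.obj X : Type w) →+ F.obj X' from (F.map f).hom).comp (cr1sub F X).subtype)
      (cr1sub F X') (fun z => cr1sub_map f z.2)
  map_id X := by
    ext z
    show F.map (𝟙 X) z.1 = z.1
    rw [F.map_id]; rfl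
  map_comp {X X' X''} f g := by
    ext z
    exact fmap_comp_apply F f g z.1

/-- `crHigher F n Ys` is `cr_{n+2}F` as a functor in the first variable, i.e.
`X ↦ cr_{n+2}F(X, Ys 0, ..., Ys n)`, defined inductively by
`cr_{n}F(X₁,…,Xₙ) = cr₂(cr_{n−1}F(−,X₃,…,Xₙ))(X₁,X₂)`. -/
def crHigher (F : C ⥤ AddCommGrpCat.{w}) : (n : ℕ) → (Fin (n + 1) → C) → (C ⥤ AddCommGrpCat.{w})
  | 0, Ys => cr2Fun F (Ys 0)
  | n+1, Ys => cr2Fun (crHigher F n (fun i => Ys i.succ)) (Ys 0)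

/-- `crGrp F k Xs` is the value `cr_{k+1}F(Xs 0, …, Xs k)` of the `(k+1)`-st
cross-effect of `F`. -/
def crGrp (F : C ⥤ AddCommGrpCat.{w}) : (k : ℕ) → (Fin (k + 1) → C) → AddCommGrpCat.{w}
  | 0, Xs => AddCommGrpCat.of (cr1sub F (Xs 0))
  | k+1, Xs => (crHigher F k (fun i => Xs i.succ)).obj (Xs 0)

/-- `F` is polynomial of degree `≤ n`, i.e. `cr_{n+1}F = 0`. -/
def IsPoly (F : C ⥤ AddCommGrpCat.{w}) (n : ℕ) : Prop :=
  ∀ Xs : Fin (n + 1) → C, Subsingleton (crGrp F n Xs)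

/-- The ambient iterated binary coproduct in which the `(n+2)`-nd cross-effect lives. -/
def nestH : (n : ℕ) → (Fin (n + 1) → C) → C → C
  | 0, Ys, X => X ⨿ Ys 0
  | n+1, Ys, X => nestH n (fun i => Ys i.succ) (X ⨿ Ys 0)

/-- The canonical inclusion of `cr_{n+2}F(X, Ys)` into `F` of the ambient coproduct. -/
def crIncl (F : C ⥤ AddCommGrpCat.{w}) : (n : ℕ) → (Ys : Fin (n + 1) → C) → (X : C) →
    (((crHigher F n Ys).obj X : Type w) →+ F.obj (nestH n Ys X))
  | 0, Ys, X => (cr2sub F X (Ys 0)).subtype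
  | n+1, Ys, X =>
    (crIncl F n (fun i => Ys i.succ) (X ⨿ Ys 0)).comp
      (cr2sub (crHigher F n (fun i => Ys i.succ)) X (Ys 0)).subtype

/-- The iterated fold map on the ambient coproduct, relative to a map `g : Z ⟶ X`. -/
def foldNest (X : C) : (n : ℕ) → (Z : C) → (Z ⟶ X) → ((nestH n (fun _ => X) Z) ⟶ X)
  | 0, _, g => coprod.desc g (𝟙 X)
  | n+1, Z, g => foldNest X n (Z ⨿ X) (coprod.desc g (𝟙 X))

/-- The image of `S_{n+2} : cr_{n+2}F(X,…,X) → F(X)` (inclusion followed by the fold map). -/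
def imS (F : C ⥤ AddCommGrpCat.{w}) (n : ℕ) (X : C) : AddSubgroup (F.obj X) :=
  AddMonoidHom.range
    ((show (F.obj (nestH n (fun _ => X) X) : Type w) →+ F.obj X from
        (F.map (foldNest X n X (𝟙 X))).hom).comp
      (crIncl F n (fun _ => X) X))

/-- The image of `S_{k+1} : cr_{k+1}F(X,…,X) → F(X)`. -/
def imSk (F : C ⥤ AddCommGrpCat.{w}) : (k : ℕ) → (X : C) → AddSubgroup (F.obj X)
  | 0, X => cr1sub F X
  | k+1, X => imS F k X

/-- The value `T_kF(X) = coker(S_{k+1} : cr_{k+1}F(X,…,X) → F(X))` of the `k`-th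
Taylorization of `F`. -/
def TObj (F : C ⥤ AddCommGrpCat.{w}) (k : ℕ) (X : C) : Type w :=
  (F.obj X : Type w) ⧸ imSk F k X

instance (F : C ⥤ AddCommGrpCat.{w}) (k : ℕ) (X : C) : AddCommGroup (TObj F k X) :=
  QuotientAddGroup.Quotient.addCommGroup _

/-- The second cross-effect of `F` as a bifunctor `C × C ⥤ Ab`. -/
def cr2Bif (F : C ⥤ AddCommGrpCat.{w}) : C × C ⥤ AddCommGrpCat.{w} where
  obj P := AddCommGrpCat.of (cr2sub F P.1 P.2)
  map {P Q} f := AddCommGrpCat.ofHom <|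
    AddMonoidHom.codRestrict
      ((show (F.obj (P.1 ⨿ P.2) : Type w) →+ F.obj (Q.1 ⨿ Q.2) from
          (F.map (coprod.map f.1 f.2)).hom).comp (cr2sub F P.1 P.2).subtype)
      (cr2sub F Q.1 Q.2) (fun z => by
        have h1 : F.map (coprod.map f.1 (𝟙 P.2)) z.1 ∈ cr2sub F Q.1 P.2 := cr2sub_map f.1 z.2
        have h2 := cr2sub_map' (X := Q.1) f.2 h1
        rw [← fmap_comp_apply] at h2
        rw [show coprod.map f.1 f.2 = coprod.map f.1 (𝟙 P.2) ≫ coprod.map (𝟙 Q.1) f.2 by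
          apply coprod.hom_ext <;> simp]
        exact h2)
  map_id P := by
    ext z
    show F.map (coprod.map (𝟙 P.1) (𝟙 P.2)) z.1 = z.1
    rw [show coprod.map (𝟙 P.1) (𝟙 P.2) = 𝟙 (P.1 ⨿ P.2) by apply coprod.hom_ext <;> simp]
    rw [F.map_id]; rfl
  map_comp {P Q R} f g := by
    ext z
    show F.map (coprod.map (f.1 ≫ g.1) (f.2 ≫ g.2)) z.1 =
      F.map (coprod.map g.1 g.2) (F.map (coprod.map f.1 f.2) z.1)
    rw [show coprod.map (f.1 ≫ g.1) (f.2 ≫ g.2) =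
      coprod.map f.1 f.2 ≫ coprod.map g.1 g.2 by apply coprod.hom_ext <;> simp]
    rw [fmap_comp_apply]

/-- For a bifunctor `B`, the second cross-effect in the first variable:
`cr₂(B(−,Y))(X,X) ⊆ B(X∨X, Y)`. -/
def crV1 (B : C × C ⥤ AddCommGrpCat.{w}) (X Y : C) : AddSubgroup (B.obj (X ⨿ X, Y)) :=
  AddMonoidHom.ker (show (B.obj (X ⨿ X, Y) : Type w) →+ B.obj (X, Y) from
    (B.map ((r1 X X, 𝟙 Y) : (X ⨿ X, Y) ⟶ (X, Y))).hom) ⊓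
  AddMonoidHom.ker (show (B.obj (X ⨿ X, Y) : Type w) →+ B.obj (X, Y) from
    (B.map ((r2 X X, 𝟙 Y) : (X ⨿ X, Y) ⟶ (X, Y))).hom)

/-- For a bifunctor `B`, the second cross-effect in the second variable:
`cr₂(B(X,−))(Y,Y) ⊆ B(X, Y∨Y)`. -/
def crV2 (B : C × C ⥤ AddCommGrpCat.{w}) (X Y : C) : AddSubgroup (B.obj (X, Y ⨿ Y)) :=
  AddMonoidHom.ker (show (B.obj (X, Y ⨿ Y) : Type w) →+ B.obj (X, Y) from
    (B.map ((𝟙 X, r1 Y Y) : (X, Y ⨿ Y) ⟶ (X, Y))).hom) ⊓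
  AddMonoidHom.ker (show (B.obj (X, Y ⨿ Y) : Type w) →+ B.obj (X, Y) from
    (B.map ((𝟙 X, r2 Y Y) : (X, Y ⨿ Y) ⟶ (X, Y))).hom)

/-- The image of `S₂` applied in the first variable of the bifunctor `B`. -/
def N1 (B : C × C ⥤ AddCommGrpCat.{w}) (X Y : C) : AddSubgroup (B.obj (X, Y)) :=
  (crV1 B X Y).map (show (B.obj (X ⨿ X, Y) : Type w) →+ B.obj (X, Y) from
    (B.map ((fold X, 𝟙 Y) : (X ⨿ X, Y) ⟶ (X, Y))).hom)

/-- The image of `S₂` applied in the second variable of the bifunctor `B`. -/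
def N2 (B : C × C ⥤ AddCommGrpCat.{w}) (X Y : C) : AddSubgroup (B.obj (X, Y)) :=
  (crV2 B X Y).map (show (B.obj (X, Y ⨿ Y) : Type w) →+ B.obj (X, Y) from
    (B.map ((𝟙 X, fold Y) : (X, Y ⨿ Y) ⟶ (X, Y))).hom)

/-- The value `T₁₁B(X,Y)` of the bilinearization of a bifunctor `B`: the quotient of
`B(X,Y)` by the images of the maps `S₂` applied in each variable separately. -/
def T11Obj (B : C × C ⥤ AddCommGrpCat.{w}) (X Y : C) : Type w :=
  (B.obj (X, Y) : Type w) ⧸ (N1 B X Y ⊔ N2 B X Y)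

instance (B : C × C ⥤ AddCommGrpCat.{w}) (X Y : C) : AddCommGroup (T11Obj B X Y) :=
  QuotientAddGroup.Quotient.addCommGroup _

/-- A bifunctor is bireduced if it vanishes whenever one variable is the zero object. -/
def Bireduced (B : C × C ⥤ AddCommGrpCat.{w}) : Prop :=
  ∀ X : C, Subsingleton (B.obj (X, (0 : C))) ∧ Subsingleton (B.obj ((0 : C), X))

/- ### Induced maps on cross-effects -/

/-- A natural transformation induces a map on second cross-effects (first variable form). -/
def cr2MapL {F G : C ⥤ AddCommGrpCat.{w}} (α : F ⟶ G) (Y : C) : cr2Fun F Y ⟶ cr2Fun G Y where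
  app X := AddCommGrpCat.ofHom <|
    AddMonoidHom.codRestrict
      ((show (F.obj (X ⨿ Y) : Type w) →+ G.obj (X ⨿ Y) from (α.app (X ⨿ Y)).hom).comp
        (cr2sub F X Y).subtype)
      (cr2sub G X Y) (fun z => by
        have natr1 := congrArg (fun (h : F.obj (X ⨿ Y) ⟶ G.obj X) => h z.1)
          (α.naturality (r1 X Y))
        have natr2 := congrArg (fun (h : F.obj (X ⨿ Y) ⟶ G.obj Y) => h z.1)
          (α.naturality (r2 X Y))
        constructor
        · show G.map (r1 X Y) (α.app (X ⨿ Y) z.1) = 0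
          have : α.app X (F.map (r1 X Y) z.1) = G.map (r1 X Y) (α.app (X ⨿ Y) z.1) := natr1
          rw [← this, show F.map (r1 X Y) z.1 = 0 from z.2.1, map_zero]
        · show G.map (r2 X Y) (α.app (X ⨿ Y) z.1) = 0
          have : α.app Y (F.map (r2 X Y) z.1) = G.map (r2 X Y) (α.app (X ⨿ Y) z.1) := natr2
          rw [← this, show F.map (r2 X Y) z.1 = 0 from z.2.2, map_zero])
  naturality {X X'} f := by
    ext z
    apply Subtype.ext
    show α.app (X' ⨿ Y) (F.map (coprod.map f (𝟙 Y)) z.1) =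
      G.map (coprod.map f (𝟙 Y)) (α.app (X ⨿ Y) z.1)
    exact congrArg (fun (h : F.obj (X ⨿ Y) ⟶ G.obj (X' ⨿ Y)) => h z.1)
      (α.naturality (coprod.map f (𝟙 Y)))

/-- A natural transformation induces a map on first cross-effects. -/
def cr1Map {F G : C ⥤ AddCommGrpCat.{w}} (α : F ⟶ G) : cr1Fun F ⟶ cr1Fun G where
  app X := AddCommGrpCat.ofHom <|
    AddMonoidHom.codRestrict
      ((show (F.obj X : Type w) →+ G.obj X from (α.app X).hom).comp (cr1sub F X).subtype)
      (cr1sub G X) (fun z => by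
        show G.map (0 : X ⟶ 0) (α.app X z.1) = 0
        have : α.app (0 : C) (F.map (0 : X ⟶ 0) z.1) = G.map (0 : X ⟶ 0) (α.app X z.1) :=
          congrArg (fun (h : F.obj X ⟶ G.obj (0 : C)) => h z.1) (α.naturality (0 : X ⟶ 0))
        rw [← this, show F.map (0 : X ⟶ 0) z.1 = 0 from z.2, map_zero])
  naturality {X X'} f := by
    ext z
    apply Subtype.ext
    show α.app X' (F.map f z.1) = G.map f (α.app X z.1)
    exact congrArg (fun (h : F.obj X ⟶ G.obj X') => h z.1) (α.naturality f)

/-- A natural transformation induces maps on all higher cross-effects. -/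
def crHigherMap {F G : C ⥤ AddCommGrpCat.{w}} (α : F ⟶ G) :
    (n : ℕ) → (Ys : Fin (n + 1) → C) → (crHigher F n Ys ⟶ crHigher G n Ys)
  | 0, Ys => cr2MapL α (Ys 0)
  | n+1, Ys => cr2MapL (crHigherMap α n (fun i => Ys i.succ)) (Ys 0)

/-- The map induced by a natural transformation on the value of the `(k+1)`-st cross-effect. -/
def crGrpMap {F G : C ⥤ AddCommGrpCat.{w}} (α : F ⟶ G) :
    (k : ℕ) → (Xs : Fin (k + 1) → C) → (crGrp F k Xs ⟶ crGrp G k Xs)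
  | 0, Xs => (cr1Map α).app (Xs 0)
  | k+1, Xs => (crHigherMap α k (fun i => Xs i.succ)).app (Xs 0)

/- ### The reduced standard projective functor `U_X` -/

/-- The subgroup of `ℤ[C(X,Z)]` spanned by the zero morphism. -/
def USub (X Z : C) : AddSubgroup ((X ⟶ Z) →₀ ℤ) :=
  AddSubgroup.closure {Finsupp.single (0 : X ⟶ Z) 1}

/-- The value `U_X(Z) = ℤ[C(X,Z)]/ℤ[0]` of the reduced standard projective functor. -/
def UObj (X Z : C) : Type v := ((X ⟶ Z) →₀ ℤ) ⧸ USub X Z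

instance (X Z : C) : AddCommGroup (UObj X Z) := QuotientAddGroup.Quotient.addCommGroup _

lemma USub_le_comap (X : C) {Z Z' : C} (g : Z ⟶ Z') :
    USub X Z ≤ AddSubgroup.comap
      (Finsupp.mapDomain.addMonoidHom (fun φ : X ⟶ Z => φ ≫ g)) (USub X Z') := by
  rw [USub, AddSubgroup.closure_le]
  rintro x rfl
  show Finsupp.mapDomain.addMonoidHom (fun φ : X ⟶ Z => φ ≫ g)
      (Finsupp.single (0 : X ⟶ Z) 1) ∈ USub X Z'
  rw [Finsupp.mapDomain.addMonoidHom_apply, Finsupp.mapDomain_single, zero_comp]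
  exact AddSubgroup.subset_closure rfl

/-- The reduced standard projective functor `U_X : C ⥤ Ab` associated with `X`,
the quotient of `Z ↦ ℤ[C(X,Z)]` by the subfunctor spanned by the zero morphisms. -/
def UFun (X : C) : C ⥤ AddCommGrpCat.{v} where
  obj Z := AddCommGrpCat.of (UObj X Z)
  map {Z Z'} g := AddCommGrpCat.ofHom <|
    QuotientAddGroup.map (USub X Z) (USub X Z')
      (Finsupp.mapDomain.addMonoidHom (fun φ : X ⟶ Z => φ ≫ g)) (USub_le_comap X g)
  map_id Z := by
    ext x
    refine QuotientAddGroup.induction_on x (fun z => ?_)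
    change QuotientAddGroup.map (USub X Z) (USub X Z) _ (USub_le_comap X (𝟙 Z))
      (QuotientAddGroup.mk z) = QuotientAddGroup.mk z
    rw [QuotientAddGroup.map_mk]
    congr 1
    simp only [Finsupp.mapDomain.addMonoidHom_apply, Category.comp_id]
    exact Finsupp.mapDomain_id
  map_comp {Z Z' Z''} g h := by
    ext x
    refine QuotientAddGroup.induction_on x (fun z => ?_)
    change QuotientAddGroup.map (USub X Z) (USub X Z'') _ (USub_le_comap X (g ≫ h))
      (QuotientAddGroup.mk z) =
      QuotientAddGroup.map (USub X Z') (USub X Z'') _ (USub_le_comap X h)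
      (QuotientAddGroup.map (USub X Z) (USub X Z') _ (USub_le_comap X g)
        (QuotientAddGroup.mk z))
    rw [QuotientAddGroup.map_mk, QuotientAddGroup.map_mk, QuotientAddGroup.map_mk]
    congr 1
    simp only [Finsupp.mapDomain.addMonoidHom_apply, ← Finsupp.mapDomain_comp]
    congr 1
    funext φ
    simp

/-- The class of a morphism `φ : X ⟶ Z` in `U_X(Z)`. -/
def uOf {X Z : C} (φ : X ⟶ Z) : UObj X Z := QuotientAddGroup.mk (Finsupp.single φ (1 : ℤ))

/-- The iterated sum `E^{∨k}` of copies of `E` (with `E^{∨0} = 0`). -/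
def pow (E : C) : ℕ → C
  | 0 => 0
  | n+1 => pow E n ⨿ E

/-- The summand `cr_{|S|}F(X_{i₁},…,X_{i_k})` attached to a nonempty subset `S ⊆ Fin n`. -/
def piece (F : C ⥤ AddCommGrpCat.{w}) {n : ℕ} (X : Fin n → C)
    (S : {S : Finset (Fin n) // S.Nonempty}) : AddCommGrpCat.{w} :=
  crGrp F (S.1.card - 1) fun i =>
    X (S.1.orderIsoOfFin rfl
        (Fin.cast (Nat.succ_pred_eq_of_pos (Finset.card_pos.mpr S.2)) i))

/-!
Induction on `n`. Write `X₁ ∨ ⋯ ∨ Xₙ₊₁ = W ∨ Z` with `W = X₁ ∨ ⋯ ∨ Xₙ` and `Z = Xₙ₊₁`. For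
reduced `F`, the retractions `r₁, r₂` and injections `i₁, i₂` split
`F(W ∨ Z) ≅ F(W) ⊕ F(Z) ⊕ cr₂F(W, Z)`. The functor `cr₂F(−, Z)` is again reduced and its
`k`-th cross-effect is `cr_{k+1}F(−, …, −, Z)`, so the induction hypothesis, applied to `F` and
to `cr₂F(−, Z)` at `W`, produces the summands indexed by the subsets not containing `n + 1`
and by those containing `n + 1` and some other index; `F(Z)` is the summand of `{n + 1}`.
-/

def addEquivProdProdInfKerOfSections {M A B : Type*} [AddCommGroup M] [AddCommGroup A]
    [AddCommGroup B] (p : M →+ A) (q : M →+ B) (s : A →+ M) (t : B →+ M)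
    (hps : p.comp s = .id A) (hpt : p.comp t = 0) (hqs : q.comp s = 0)
    (hqt : q.comp t = .id B) :
    M ≃+ A × B × (p.ker ⊓ q.ker : AddSubgroup M) := by
  have ps a : p (s a) = a := DFunLike.congr_fun hps a
  have pt b : p (t b) = 0 := DFunLike.congr_fun hpt b
  have qs a : q (s a) = 0 := DFunLike.congr_fun hqs a
  have qt b : q (t b) = b := DFunLike.congr_fun hqt b
  refine
    { toFun z := (p z, q z, ⟨z - s (p z) - t (q z), ?_, ?_⟩)
      invFun x := s x.1 + t x.2.1 + x.2.2
      left_inv z := by simp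
      right_inv := ?_
      map_add' z w := ?_ }
  · simp [ps, pt]
  · simp [qs, qt]
  · rintro ⟨a, b, c, hc⟩
    have hpc : p c = 0 := hc.1
    have hqc : q c = 0 := hc.2
    ext
    · simp [ps, pt, hpc]
    · simp [qs, qt, hqc]
    · simp only [map_add, ps, pt, qs, qt, hpc, hqc, add_zero, zero_add]
      abel
  · refine Prod.ext (map_add p z w) (Prod.ext (map_add q z w) (Subtype.ext ?_))
    simp only [map_add, Prod.snd_add, AddSubgroup.coe_add]
    abel

@[simp]
lemma inl_r1 (X Y : C) : coprod.inl ≫ r1 X Y = 𝟙 X := coprod.inl_desc _ _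

@[simp]
lemma inr_r1 (X Y : C) : coprod.inr ≫ r1 X Y = 0 := coprod.inr_desc _ _

@[simp]
lemma inl_r2 (X Y : C) : coprod.inl ≫ r2 X Y = 0 := coprod.inl_desc _ _

@[simp]
lemma inr_r2 (X Y : C) : coprod.inr ≫ r2 X Y = 𝟙 Y := coprod.inr_desc _ _

lemma Reduced.preservesZeroMorphisms {F : C ⥤ AddCommGrpCat.{w}} (hF : Reduced F) :
    F.PreservesZeroMorphisms :=
  have : Subsingleton (F.obj 0) := hF
  Functor.preservesZeroMorphisms_of_map_zero_object
    (AddCommGrpCat.isZero_of_subsingleton _).isoZero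

lemma cr1sub_eq_top {F : C ⥤ AddCommGrpCat.{w}} (hF : Reduced F) (X : C) : cr1sub F X = ⊤ :=
  eq_top_iff.mpr fun x _ => hF.elim (F.map (0 : X ⟶ 0) x) 0

lemma cr2Fun_reduced (F : C ⥤ AddCommGrpCat.{w}) (Y : C) : Reduced (cr2Fun F Y) := by
  have retract : r2 (0 : C) Y ≫ coprod.inr = 𝟙 _ :=
    coprod.hom_ext ((isZero_zero C).eq_of_src _ _) (by simp [← Category.assoc])
  have h (z : cr2sub F 0 Y) : (z : F.obj ((0 : C) ⨿ Y)) = 0 := by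
    rw [← ConcreteCategory.id_apply (X := F.obj _) z.1, ← F.map_id, ← retract, F.map_comp,
      ConcreteCategory.comp_apply, (mem_cr2sub.mp z.2).2, map_zero]
  exact ⟨fun c c' => Subtype.ext ((h c).trans (h c').symm)⟩

def coprodAddEquiv {F : C ⥤ AddCommGrpCat.{w}} (hF : Reduced F) (A B : C) :
    F.obj (A ⨿ B) ≃+ F.obj A × F.obj B × cr2sub F A B :=
  have := hF.preservesZeroMorphisms
  addEquivProdProdInfKerOfSections (F.map (r1 A B)).hom (F.map (r2 A B)).hom
    (F.map coprod.inl).hom (F.map coprod.inr).hom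
    (by rw [← AddCommGrpCat.hom_comp, ← F.map_comp, inl_r1, F.map_id]; rfl)
    (by rw [← AddCommGrpCat.hom_comp, ← F.map_comp, inr_r1, F.map_zero]; rfl)
    (by rw [← AddCommGrpCat.hom_comp, ← F.map_comp, inl_r2, F.map_zero]; rfl)
    (by rw [← AddCommGrpCat.hom_comp, ← F.map_comp, inr_r2, F.map_id]; rfl)

lemma crHigher_succ (F : C ⥤ AddCommGrpCat.{w}) (m : ℕ) (Ys : Fin (m + 2) → C) :
    crHigher F (m + 1) Ys = crHigher (cr2Fun F (Ys (Fin.last _))) m (Fin.init Ys) := by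
  induction m with
  | zero => rfl
  | succ m ih => exact congrArg (cr2Fun · (Ys 0)) (ih (Fin.tail Ys))

lemma crGrp_succ_succ (F : C ⥤ AddCommGrpCat.{w}) (k : ℕ) (Xs : Fin (k + 3) → C) :
    crGrp F (k + 2) Xs = crGrp (cr2Fun F (Xs (Fin.last _))) (k + 1) (Fin.init Xs) :=
  congrArg (Functor.obj · (Xs 0)) (crHigher_succ F k (Fin.tail Xs))

def crGrpSuccAddEquiv (F : C ⥤ AddCommGrpCat.{w}) :
    (k : ℕ) → (Xs : Fin (k + 2) → C) →
      crGrp F (k + 1) Xs ≃+ crGrp (cr2Fun F (Xs (Fin.last _))) k (Fin.init Xs)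
  | 0, Xs => ((AddEquiv.addSubgroupCongr (cr1sub_eq_top (cr2Fun_reduced F _) (Xs 0))).trans
      AddSubgroup.topEquiv).symm
  | k + 1, Xs => (eqToIso (crGrp_succ_succ F k Xs)).addCommGroupIsoToAddEquiv

def crGrpSnocAddEquiv (F : C ⥤ AddCommGrpCat.{w}) (k : ℕ) (Ys : Fin (k + 1) → C) (Z : C) :
    crGrp F (k + 1) (Fin.snoc Ys Z) ≃+ crGrp (cr2Fun F Z) k Ys :=
  (crGrpSuccAddEquiv F k _).trans
    (eqToIso (by rw [Fin.snoc_last, Fin.init_snoc])).addCommGroupIsoToAddEquiv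

lemma piece_eq_crGrp (F : C ⥤ AddCommGrpCat.{w}) {n k : ℕ} (X : Fin n → C)
    (S : {S : Finset (Fin n) // S.Nonempty}) (hk : S.1.card = k + 1) :
    piece F X S = crGrp F k (X ∘ S.1.orderEmbOfFin hk) := by
  obtain rfl : S.1.card - 1 = k := by omega
  unfold piece
  congr 1

section FinsetFinSucc

variable {n : ℕ}

lemma orderEmbOfFin_map_castSuccEmb {k : ℕ} (T : Finset (Fin n)) (h : T.card = k)
    (h' : (T.map Fin.castSuccEmb).card = k) :
    ⇑((T.map Fin.castSuccEmb).orderEmbOfFin h') = Fin.castSucc ∘ T.orderEmbOfFin h :=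
  (Finset.orderEmbOfFin_unique h' (fun i => Finset.mem_map_of_mem _ (T.orderEmbOfFin_mem h i))
    (Fin.strictMono_castSucc.comp (T.orderEmbOfFin h).strictMono)).symm

lemma orderEmbOfFin_insert_last {k : ℕ} (T : Finset (Fin n)) (h : T.card = k)
    (h' : (insert (Fin.last n) (T.map Fin.castSuccEmb)).card = k + 1) :
    ⇑((insert (Fin.last n) (T.map Fin.castSuccEmb)).orderEmbOfFin h') =
      Fin.snoc (Fin.castSucc ∘ T.orderEmbOfFin h) (Fin.last n) := by
  refine (Finset.orderEmbOfFin_unique h' (fun i => ?_) ?_).symm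
  · induction i using Fin.lastCases with
    | last => simp
    | cast j => simp [T.orderEmbOfFin_mem h j]
  · rw [← Fin.insertNth_last', Fin.strictMono_insertNth_iff]
    refine ⟨Fin.strictMono_castSucc.comp (T.orderEmbOfFin h).strictMono,
      fun i _ => Fin.castSucc_lt_last _, fun i hi => absurd hi ?_⟩
    simp

def castSuccPreimage (S : Finset (Fin (n + 1))) : Finset (Fin n) :=
  S.preimage Fin.castSucc (Fin.castSucc_injective n).injOn

@[simp]
lemma mem_castSuccPreimage {S : Finset (Fin (n + 1))} {i : Fin n} :
    i ∈ castSuccPreimage S ↔ i.castSucc ∈ S :=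
  Finset.mem_preimage

lemma castSuccPreimage_map (T : Finset (Fin n)) :
    castSuccPreimage (T.map Fin.castSuccEmb) = T :=
  Finset.preimage_map Fin.castSuccEmb T

lemma castSuccPreimage_insert_last (T : Finset (Fin n)) :
    castSuccPreimage (insert (Fin.last n) (T.map Fin.castSuccEmb)) = T := by
  ext i
  simp [Fin.castSucc_ne_last]

lemma map_castSuccPreimage {S : Finset (Fin (n + 1))} (h : Fin.last n ∉ S) :
    (castSuccPreimage S).map Fin.castSuccEmb = S := by
  ext x
  induction x using Fin.lastCases <;> simp [h]

lemma insert_last_map_castSuccPreimage {S : Finset (Fin (n + 1))} (h : Fin.last n ∈ S) :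
    insert (Fin.last n) ((castSuccPreimage S).map Fin.castSuccEmb) = S := by
  ext x
  induction x using Fin.lastCases <;> simp [h, Fin.castSucc_ne_last]

lemma castSuccPreimage_nonempty {S : Finset (Fin (n + 1))} (hS : S.Nonempty)
    (h : Fin.last n ∉ S) : (castSuccPreimage S).Nonempty := by
  rw [← Finset.map_nonempty (f := Fin.castSuccEmb), map_castSuccPreimage h]
  exact hS

variable (n) in
def nonemptyFinsetSuccEquiv :
    {T : Finset (Fin n) // T.Nonempty} ⊕ Option {T : Finset (Fin n) // T.Nonempty} ≃
      {S : Finset (Fin (n + 1)) // S.Nonempty} where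
  toFun
    | .inl T => ⟨T.1.map Fin.castSuccEmb, T.2.map⟩
    | .inr none => ⟨{Fin.last n}, Finset.singleton_nonempty _⟩
    | .inr (some T) =>
      ⟨insert (Fin.last n) (T.1.map Fin.castSuccEmb), Finset.insert_nonempty _ _⟩
  invFun S :=
    if h : Fin.last n ∈ S.1 then
      .inr (if hT : (castSuccPreimage S.1).Nonempty then some ⟨_, hT⟩ else none)
    else .inl ⟨_, castSuccPreimage_nonempty S.2 h⟩
  left_inv
    | .inl T => by simp [castSuccPreimage_map]
    | .inr none => by simp [Finset.eq_empty_iff_forall_notMem, Fin.castSucc_ne_last]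
    | .inr (some T) => by simp [castSuccPreimage_insert_last, T.2]
  right_inv S := by
    by_cases h : Fin.last n ∈ S.1
    · by_cases hT : (castSuccPreimage S.1).Nonempty
      · simp [h, hT, insert_last_map_castSuccPreimage h]
      · have hS := insert_last_map_castSuccPreimage h
        rw [Finset.not_nonempty_iff_eq_empty.mp hT] at hS
        simpa [h, hT, Subtype.ext_iff] using hS
    · simp [h, map_castSuccPreimage h]

end FinsetFinSucc

lemma piece_castSucc (F : C ⥤ AddCommGrpCat.{w}) {n : ℕ} (X : Fin (n + 1) → C)
    (T : {T : Finset (Fin n) // T.Nonempty}) :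
    piece F X (nonemptyFinsetSuccEquiv n (.inl T)) = piece F (X ∘ Fin.castSucc) T := by
  have hT : T.1.card = T.1.card - 1 + 1 := (Nat.succ_pred_eq_of_pos T.2.card_pos).symm
  rw [piece_eq_crGrp F _ _ hT, piece_eq_crGrp F X _ ((Finset.card_map _).trans hT)]
  simp only [nonemptyFinsetSuccEquiv, Equiv.coe_fn_mk, orderEmbOfFin_map_castSuccEmb _ hT]
  rfl

def pieceLastAddEquiv {F : C ⥤ AddCommGrpCat.{w}} (hF : Reduced F) {n : ℕ}
    (X : Fin (n + 1) → C) :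
    piece F X (nonemptyFinsetSuccEquiv n (.inr none)) ≃+ F.obj (X (Fin.last n)) :=
  have h : piece F X (nonemptyFinsetSuccEquiv n (.inr none)) =
      crGrp F 0 (fun _ => X (Fin.last n)) := by
    rw [piece_eq_crGrp F X _ (Finset.card_singleton _)]
    congr 1
    funext i
    simp [nonemptyFinsetSuccEquiv]
  (eqToIso h).addCommGroupIsoToAddEquiv.trans
    ((AddEquiv.addSubgroupCongr (cr1sub_eq_top hF _)).trans AddSubgroup.topEquiv)

def pieceInsertLastAddEquiv (F : C ⥤ AddCommGrpCat.{w}) {n : ℕ} (X : Fin (n + 1) → C)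
    (T : {T : Finset (Fin n) // T.Nonempty}) :
    piece F X (nonemptyFinsetSuccEquiv n (.inr (some T))) ≃+
      piece (cr2Fun F (X (Fin.last n))) (X ∘ Fin.castSucc) T :=
  have hT : T.1.card = T.1.card - 1 + 1 := (Nat.succ_pred_eq_of_pos T.2.card_pos).symm
  have hS : (nonemptyFinsetSuccEquiv n (.inr (some T))).1.card = T.1.card - 1 + 1 + 1 := by
    rw [← hT]
    exact (Finset.card_insert_of_notMem (by simp [Fin.castSucc_ne_last])).trans
      (congrArg (· + 1) (Finset.card_map _))
  have hX : X ∘ (nonemptyFinsetSuccEquiv n (.inr (some T))).1.orderEmbOfFin hS =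
      Fin.snoc ((X ∘ Fin.castSucc) ∘ T.1.orderEmbOfFin hT) (X (Fin.last n)) :=
    (congrArg (X ∘ ·) (orderEmbOfFin_insert_last T.1 hT hS)).trans (Fin.comp_snoc _ _ _)
  (eqToIso ((piece_eq_crGrp F X _ hS).trans (congrArg _ hX))).addCommGroupIsoToAddEquiv.trans <|
    (crGrpSnocAddEquiv F _ _ _).trans
      (eqToIso (piece_eq_crGrp _ _ _ hT).symm).addCommGroupIsoToAddEquiv

def piPieceSuccAddEquiv {F : C ⥤ AddCommGrpCat.{w}} (hF : Reduced F) {n : ℕ}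
    (X : Fin (n + 1) → C) :
    ((T : {T : Finset (Fin n) // T.Nonempty}) → piece F (X ∘ Fin.castSucc) T) ×
        F.obj (X (Fin.last n)) ×
        ((T : {T : Finset (Fin n) // T.Nonempty}) →
          piece (cr2Fun F (X (Fin.last n))) (X ∘ Fin.castSucc) T) ≃+
      ((S : {S : Finset (Fin (n + 1)) // S.Nonempty}) → piece F X S) :=
  ((AddEquiv.piCongrRight fun T =>
      (eqToIso (piece_castSucc F X T)).addCommGroupIsoToAddEquiv.symm).prodCongr
    (((pieceLastAddEquiv hF X).symm.prodCongr
      (AddEquiv.piCongrRight fun T => (pieceInsertLastAddEquiv F X T).symm)).trans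
        (LinearEquiv.piOptionEquivProd ℤ
          (M := fun o => piece F X (nonemptyFinsetSuccEquiv n (.inr o)))).toAddEquiv.symm)).trans <|
  (LinearEquiv.sumPiEquivProdPi ℤ _ _ _).toAddEquiv.symm.trans
    (LinearEquiv.piCongrLeft ℤ (fun S => piece F X S) (nonemptyFinsetSuccEquiv n)).toAddEquiv

def coprodFinSuccIso [HasFiniteCoproducts C] {n : ℕ} (X : Fin (n + 1) → C) :
    ∐ X ≅ (∐ fun i : Fin n => X i.castSucc) ⨿ X (Fin.last n) where
  hom := Sigma.desc fun i =>
    Fin.lastCases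
      (motive := fun i => X i ⟶ (∐ fun i : Fin n => X i.castSucc) ⨿ X (Fin.last n))
      coprod.inr (fun j => Sigma.ι (fun i : Fin n => X i.castSucc) j ≫ coprod.inl) i
  inv := coprod.desc (Sigma.desc fun j => Sigma.ι X j.castSucc) (Sigma.ι X (Fin.last n))
  hom_inv_id := Sigma.hom_ext _ _ fun i => by
    induction i using Fin.lastCases <;> simp [coprod.inl_desc, coprod.inr_desc]
  inv_hom_id := by
    refine coprod.hom_ext (Sigma.hom_ext _ _ fun j => ?_) ?_
    · simp only [coprod.inl_desc_assoc, Sigma.ι_desc_assoc, Sigma.ι_desc, Fin.lastCases_castSucc,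
        Category.comp_id]
    · simp only [coprod.inr_desc_assoc, Sigma.ι_desc, Fin.lastCases_last, Category.comp_id]

theorem nonempty_addEquiv_pi_piece [HasFiniteCoproducts C] {F : C ⥤ AddCommGrpCat.{w}}
    (hF : Reduced F) {n : ℕ} (X : Fin n → C) :
    Nonempty (F.obj (∐ X) ≃+ ((S : {S : Finset (Fin n) // S.Nonempty}) → piece F X S)) := by
  induction n generalizing F with
  | zero =>
    have := hF.preservesZeroMorphisms
    have : Subsingleton (F.obj (∐ X)) := AddCommGrpCat.subsingleton_of_isZero <|
      F.map_isZero ((IsZero.iff_id_eq_zero _).mpr (Sigma.hom_ext _ _ fun i => i.elim0))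
    have : IsEmpty {S : Finset (Fin 0) // S.Nonempty} :=
      ⟨fun S => S.2.ne_empty (Subsingleton.elim _ _)⟩
    have := uniqueOfSubsingleton (0 : F.obj (∐ X))
    exact ⟨AddEquiv.ofUnique⟩
  | succ n ih =>
    obtain ⟨eF⟩ := ih hF (X ∘ Fin.castSucc)
    obtain ⟨eG⟩ := ih (cr2Fun_reduced F (X (Fin.last n))) (X ∘ Fin.castSucc)
    exact ⟨(F.mapIso (coprodFinSuccIso X)).addCommGroupIsoToAddEquiv.trans <|
      (coprodAddEquiv hF _ _).trans <|
        (eF.prodCongr ((AddEquiv.refl _).prodCongr eG)).trans (piPieceSuccAddEquiv hF X)⟩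

theorem statement0 [HasFiniteCoproducts C] (F : C ⥤ AddCommGrpCat.{w}) (hF : Reduced F)
    (n : ℕ) (X : Fin n → C) :
    Nonempty ((F.obj (∐ X) : Type w) ≃+
      DirectSum {S : Finset (Fin n) // S.Nonempty} (fun S => (piece F X S : Type w))) := by
  obtain ⟨e⟩ := nonempty_addEquiv_pi_piece hF X
  exact ⟨e.trans (DirectSum.linearEquivFunOnFintype ℤ _ _).toAddEquiv.symm⟩

end

end QF
end

section
/- Let Id_Gr : Gr → Gr be the identity functor of the category of groups. There is a natural isomorphism of functors Gr → Gr, Γ₁ : G^{ab} → T₁(Id_Gr)(G), sending the class of g ∈ G in G^{ab} = G/[G,G] to t₁(g). -/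
open Monoid
open scoped TensorProduct

universe u

namespace QF

section FreeProducts

variable (G H : Type u) [Group G] [Group H]

/-- The retraction `r₁ : G ∗ H →* G` (identity on `G`, trivial on `H`). -/
def gr1 : Coprod G H →* G := Coprod.lift (MonoidHom.id G) 1

/-- The retraction `r₂ : G ∗ H →* H` (trivial on `G`, identity on `H`). -/
def gr2 : Coprod G H →* H := Coprod.lift 1 (MonoidHom.id H)

/-- The fold map `∇² : G ∗ G →* G`. -/
def gfold : Coprod G G →* G := Coprod.lift (MonoidHom.id G) (MonoidHom.id G)

/-- The second cross-effect of the identity functor of `Gr`: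
`cr₂(Id)(G,H) = ker((r₁,r₂) : G ∗ H → G × H)`. -/
def cr2Id : Subgroup (Coprod G H) := (gr1 G H).ker ⊓ (gr2 G H).ker

/-- The image of `S₂ : cr₂(Id)(G,G) → G` (inclusion into `G ∗ G` followed by the fold map). -/
def imS2Id : Subgroup G := Subgroup.map (gfold G) (cr2Id G G)

/-- The linearization `T₁(Id_Gr)(G) = G/im(S₂)` of the identity functor
(the image of `S₂` is normal, so we may quotient by its normal closure). -/
def T1Id := G ⧸ Subgroup.normalClosure ((imS2Id G : Subgroup G) : Set G)

noncomputable instance : Group (T1Id G) :=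
  QuotientGroup.Quotient.group _

/-- The map induced by `f : G →* H` on `T₁(Id_Gr)`. -/

lemma comap_cr2Id {G G' H H' : Type u} [Group G] [Group G'] [Group H] [Group H']
    (f : G →* G') (k : H →* H') {z : Coprod G H} (hz : z ∈ cr2Id G H) :
    Coprod.map f k z ∈ cr2Id G' H' := by
  obtain ⟨h1, h2⟩ := hz
  constructor
  · show (gr1 G' H').comp (Coprod.map f k) z = 1
    rw [show (gr1 G' H').comp (Coprod.map f k) = f.comp (gr1 G H) by
      apply Coprod.hom_ext <;> ext x <;> simp [gr1]]
    show f (gr1 G H z) = 1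
    rw [show gr1 G H z = 1 from h1, map_one]
  · show (gr2 G' H').comp (Coprod.map f k) z = 1
    rw [show (gr2 G' H').comp (Coprod.map f k) = k.comp (gr2 G H) by
      apply Coprod.hom_ext <;> ext x <;> simp [gr2]]
    show k (gr2 G H z) = 1
    rw [show gr2 G H z = 1 from h2, map_one]

noncomputable def T1IdMap {G H : Type u} [Group G] [Group H] (f : G →* H) :
    T1Id G →* T1Id H :=
  QuotientGroup.map _ _ f (by
    refine Subgroup.normalClosure_le_normal ?_
    rintro x ⟨z, hz, rfl⟩
    refine Subgroup.subset_normalClosure ?_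
    refine ⟨Coprod.map f f z, comap_cr2Id f f hz, ?_⟩
    show (gfold H).comp (Coprod.map f f) z = f (gfold G z)
    rw [show (gfold H).comp (Coprod.map f f) = f.comp (gfold G) by
      apply Coprod.hom_ext <;> ext x <;> simp [gfold]]
    rfl)

open scoped commutatorElement

/- Modulo commutators the fold map is the product of the two retractions, so it kills
the cross-effect. -/
lemma of_comp_gfold (G : Type u) [Group G] :
    Abelianization.of.comp (gfold G) =
      Abelianization.of.comp (gr1 G G) * Abelianization.of.comp (gr2 G G) := by
  apply Coprod.hom_ext <;> ext <;> simp [gfold, gr1, gr2]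

lemma imS2Id_le_commutator (G : Type u) [Group G] : imS2Id G ≤ commutator G := by
  rintro _ ⟨z, ⟨hz₁, hz₂⟩, rfl⟩
  rw [← Abelianization.ker_of, MonoidHom.mem_ker, ← MonoidHom.comp_apply, of_comp_gfold,
    MonoidHom.mul_apply, MonoidHom.comp_apply, MonoidHom.comp_apply, MonoidHom.mem_ker.1 hz₁,
    MonoidHom.mem_ker.1 hz₂, map_one, mul_one]

lemma commutatorElement_inl_inr_mem_cr2Id {G H : Type u} [Group G] [Group H] (g : G) (h : H) :
    ⁅(Coprod.inl g : Coprod G H), (Coprod.inr h : Coprod G H)⁆ ∈ cr2Id G H :=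
  ⟨by simp [gr1, commutatorElement_def], by simp [gr2, commutatorElement_def]⟩

lemma commutator_le_imS2Id (G : Type u) [Group G] : commutator G ≤ imS2Id G := by
  rw [commutator_def, Subgroup.commutator_le]
  intro g _ h _
  exact ⟨_, commutatorElement_inl_inr_mem_cr2Id g h, by simp [gfold, commutatorElement_def]⟩

lemma imS2Id_eq_commutator (G : Type u) [Group G] : imS2Id G = commutator G :=
  le_antisymm (imS2Id_le_commutator G) (commutator_le_imS2Id G)

lemma normalClosure_imS2Id (G : Type u) [Group G] :
    Subgroup.normalClosure ((imS2Id G : Subgroup G) : Set G) = commutator G := by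
  rw [imS2Id_eq_commutator, Subgroup.normalClosure_eq_self]

noncomputable def abelianizationEquivT1Id (G : Type u) [Group G] : Abelianization G ≃* T1Id G :=
  QuotientGroup.quotientMulEquivOfEq (normalClosure_imS2Id G).symm

lemma abelianizationEquivT1Id_of {G : Type u} [Group G] (g : G) :
    abelianizationEquivT1Id G (Abelianization.of g) = QuotientGroup.mk g :=
  QuotientGroup.quotientMulEquivOfEq_mk _ g

lemma T1IdMap_mk {G H : Type u} [Group G] [Group H] (f : G →* H) (g : G) :
    T1IdMap f (QuotientGroup.mk g) = QuotientGroup.mk (f g) :=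
  rfl

lemma abelianizationEquivT1Id_map {G H : Type u} [Group G] [Group H] (f : G →* H)
    (x : Abelianization G) :
    abelianizationEquivT1Id H (Abelianization.map f x) =
      T1IdMap f (abelianizationEquivT1Id G x) := by
  induction x using QuotientGroup.induction_on with
  | H g =>
    change abelianizationEquivT1Id H (Abelianization.map f (Abelianization.of g)) =
      T1IdMap f (abelianizationEquivT1Id G (Abelianization.of g))
    rw [Abelianization.map_of, abelianizationEquivT1Id_of, abelianizationEquivT1Id_of, T1IdMap_mk]

theorem statement4 :
    ∃ e : ∀ (G : Type u) [Group G], Abelianization G ≃* T1Id G,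
      (∀ (G : Type u) [Group G] (g : G),
        e G (Abelianization.of g) = QuotientGroup.mk g) ∧
      (∀ (G H : Type u) [Group G] [Group H] (f : G →* H) (x : Abelianization G),
        e H (Abelianization.map f x) = T1IdMap f (e G x)) :=
  ⟨abelianizationEquivT1Id, fun _ _ => abelianizationEquivT1Id_of,
    fun _ _ _ _ => abelianizationEquivT1Id_map⟩

end FreeProducts

end QF
end

section
/- Let F : C → Ab be a reduced diagonalizable functor, i.e. F = B ∘ Δ_C for some bireduced bifunctor B : C × C → Ab, where Δ_C is the diagonal. Then the linearization of F is trivial: T₁F = 0. -/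
/-!
For `z ∈ B(X, X)` put `w = B(i₁, i₂) z ∈ F(X ∨ X)`. Then `F(r₁) w = B(id, 0) z` factors through
`B(X, 0) = 0`, and likewise `F(r₂) w = 0`, so `w ∈ cr₂F(X, X)`; and `F(∇²) w = B(id, id) z = z`.
Hence `S₂^F` is surjective and its cokernel `T₁F(X)` vanishes.
-/

open CategoryTheory Limits ZeroObject
open scoped TensorProduct

set_option linter.unusedSectionVars false

universe w v u

namespace QF

variable {C : Type u} [Category.{v} C] [HasZeroObject C] [HasZeroMorphisms C]
  [HasBinaryCoproducts C]

noncomputable section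

open CategoryTheory.Prod

lemma Bireduced.map_mkHom_zero_right {B : C × C ⥤ AddCommGrpCat.{w}} (hB : Bireduced B)
    {X X' : C} (f : X ⟶ X') (Y Y' : C) : B.map (f ×ₘ (0 : Y ⟶ Y')) = 0 := by
  have : Subsingleton (B.obj (X', (0 : C))) := (hB X').1
  have hfac : f ×ₘ (0 : Y ⟶ Y') = (f ×ₘ (0 : Y ⟶ 0)) ≫ (𝟙 X' ×ₘ (0 : 0 ⟶ Y')) := by
    simp
  rw [hfac, B.map_comp, (AddCommGrpCat.isZero_of_subsingleton _).eq_zero_of_tgt (B.map _),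
    zero_comp]

lemma Bireduced.map_mkHom_zero_left {B : C × C ⥤ AddCommGrpCat.{w}} (hB : Bireduced B)
    (X X' : C) {Y Y' : C} (g : Y ⟶ Y') : B.map ((0 : X ⟶ X') ×ₘ g) = 0 := by
  have : Subsingleton (B.obj ((0 : C), Y')) := (hB Y').2
  have hfac : (0 : X ⟶ X') ×ₘ g = ((0 : X ⟶ 0) ×ₘ g) ≫ ((0 : 0 ⟶ X') ×ₘ 𝟙 Y') := by
    simp
  rw [hfac, B.map_comp, (AddCommGrpCat.isZero_of_subsingleton _).eq_zero_of_tgt (B.map _),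
    zero_comp]

abbrev diagInclusion (B : C × C ⥤ AddCommGrpCat.{w}) (X Y : C) :
    B.obj (X, Y) ⟶ (Functor.diag C ⋙ B).obj (X ⨿ Y) :=
  B.map (coprod.inl ×ₘ coprod.inr)

lemma diagInclusion_mem_cr2sub {B : C × C ⥤ AddCommGrpCat.{w}} (hB : Bireduced B)
    {X Y : C} (z : B.obj (X, Y)) :
    diagInclusion B X Y z ∈ cr2sub (Functor.diag C ⋙ B) X Y := by
  constructor
  · show (diagInclusion B X Y ≫ B.map (r1 X Y ×ₘ r1 X Y)) z = 0
    rw [← B.map_comp, prod_comp, r1, coprod.inl_desc, coprod.inr_desc,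
      hB.map_mkHom_zero_right]
    rfl
  · show (diagInclusion B X Y ≫ B.map (r2 X Y ×ₘ r2 X Y)) z = 0
    rw [← B.map_comp, prod_comp, r2, coprod.inl_desc, coprod.inr_desc,
      hB.map_mkHom_zero_left]
    rfl

lemma diagInclusion_comp_map_fold (B : C × C ⥤ AddCommGrpCat.{w}) (X : C) :
    diagInclusion B X X ≫ (Functor.diag C ⋙ B).map (fold X) = 𝟙 _ := by
  show B.map _ ≫ B.map (fold X ×ₘ fold X) = _
  rw [← B.map_comp, prod_comp, fold, coprod.inl_desc, coprod.inr_desc, ← prod_id, B.map_id]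

lemma imSk_one_diag_comp_eq_top {B : C × C ⥤ AddCommGrpCat.{w}} (hB : Bireduced B) (X : C) :
    imSk (Functor.diag C ⋙ B) 1 X = ⊤ := by
  refine eq_top_iff.mpr fun z _ => ⟨⟨diagInclusion B X X z, diagInclusion_mem_cr2sub hB z⟩, ?_⟩
  show (diagInclusion B X X ≫ (Functor.diag C ⋙ B).map (fold X)) z = z
  rw [diagInclusion_comp_map_fold]
  rfl

theorem statement6 (B : C × C ⥤ AddCommGrpCat.{w}) (hB : Bireduced B) (X : C) :
    Subsingleton (TObj (Functor.diag C ⋙ B) 1 X) := by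
  unfold TObj
  rw [imSk_one_diag_comp_eq_top hB]
  exact QuotientAddGroup.subsingleton_quotient_top

end

end QF
end

section
/- For every reduced functor F : C → Ab and every X in C, the quadratization of F is given by T₂F(X) = F(X)/{ ((1,1,1)_* − (1,1,0)_* − (1,0,1)_* − (0,1,1)_* + (1,0,0)_* + (0,1,0)_* + (0,0,1)_*)(x) | x ∈ F(X ∨ X ∨ X) }, where (ε₁,ε₂,ε₃) : X∨X∨X → X denotes the map whose restriction to the k-th summand is id if ε_k = 1 and 0 if ε_k = 0. -/
open CategoryTheory Limits ZeroObject
open scoped TensorProduct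

set_option linter.unusedSectionVars false

universe w v u

namespace QF

variable {C : Type u} [Category.{v} C] [HasZeroObject C] [HasZeroMorphisms C]
  [HasBinaryCoproducts C]

noncomputable section

/-- The map `(ε₁,ε₂,ε₃) : X∨X∨X ⟶ X` which is the identity on the `k`-th summand
if `ε_k = true` and zero otherwise. -/
def eps3 (X : C) (a b c : Bool) : ((X ⨿ X) ⨿ X : C) ⟶ X :=
  coprod.desc (coprod.desc (if a then 𝟙 X else 0) (if b then 𝟙 X else 0))
    (if c then 𝟙 X else 0)

/-- `F` applied to `(ε₁,ε₂,ε₃)`, as a homomorphism. -/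
def eps3Hom (F : C ⥤ AddCommGrpCat.{w}) (X : C) (a b c : Bool) :
    (F.obj ((X ⨿ X) ⨿ X) : Type w) →+ F.obj X :=
  (F.map (eps3 X a b c)).hom

/-!
Let `D(f,g,h) = F(f,g,h) − F(f,g,0) − F(f,0,h) − F(0,g,h) + F(f,0,0) + F(0,g,0) + F(0,0,h)` be
the deviation of `F` at morphisms `f, g, h` out of the three summands, where `F(f,g,h)` is `F` of
the induced map out of the sum; the right-hand side is the image of `D(1,1,1)`. `D` is natural
in the target, so `F(∇³) ∘ D(ι₁,ι₂,ι₃) = D(1,1,1)` for the summand inclusions `ι_k`. For reduced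
`F`, `D` vanishes as soon as one argument is zero, so `D(ι₁,ι₂,ι₃)` lands in `cr₃F`; and every
term but the first factors through one of the retractions defining `cr₃F`, so `D(ι₁,ι₂,ι₃)` is
the identity on `cr₃F`. Being a projection onto `cr₃F(X,X,X)`, it gives
`im S₃^F = F(∇³)(cr₃F(X,X,X)) = im D(1,1,1)`.
-/

lemma map_zero_apply_of_reduced {F : C ⥤ AddCommGrpCat.{w}} (hF : Reduced F) {Y Z : C}
    (y : F.obj Y) : F.map (0 : Y ⟶ Z) y = 0 := by
  rw [show (0 : Y ⟶ Z) = (0 : Y ⟶ (0 : C)) ≫ (0 : (0 : C) ⟶ Z) by simp, fmap_comp_apply,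
    @Subsingleton.elim _ hF (F.map _ y) 0, map_zero]

/-- `cr₃F(X,Y,Z)` as a subgroup of `F((X ∨ Y) ∨ Z)`. -/
def cr3sub (F : C ⥤ AddCommGrpCat.{w}) (X Y Z : C) : AddSubgroup (F.obj ((X ⨿ Y) ⨿ Z)) :=
  cr2sub F (X ⨿ Y) Z ⊓
    (AddMonoidHom.ker (F.map (coprod.map (r1 X Y) (𝟙 Z))).hom ⊓
      AddMonoidHom.ker (F.map (coprod.map (r2 X Y) (𝟙 Z))).hom)

lemma range_crIncl_one (F : C ⥤ AddCommGrpCat.{w}) (Ys : Fin 2 → C) (X : C) :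
    (crIncl F 1 Ys X).range = cr3sub F X (Ys 0) (Ys 1) := by
  ext v
  constructor
  · rintro ⟨⟨⟨v, hv₁, hv₂⟩, hw₁, hw₂⟩, rfl⟩
    exact ⟨⟨hv₁, hv₂⟩, congrArg Subtype.val hw₁, congrArg Subtype.val hw₂⟩
  · rintro ⟨⟨hv₁, hv₂⟩, hw₁, hw₂⟩
    exact ⟨⟨⟨v, hv₁, hv₂⟩, Subtype.ext hw₁, Subtype.ext hw₂⟩, rfl⟩

section Deviation

attribute [local simp] coprod.inl_desc coprod.inr_desc coprod.inl_desc_assoc coprod.inr_desc_assoc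

variable {X Y Z W : C}

def desc3 (f : X ⟶ W) (g : Y ⟶ W) (h : Z ⟶ W) : (X ⨿ Y) ⨿ Z ⟶ W :=
  coprod.desc (coprod.desc f g) h

lemma desc3_comp {W' : C} (f : X ⟶ W) (g : Y ⟶ W) (h : Z ⟶ W) (q : W ⟶ W') :
    desc3 f g h ≫ q = desc3 (f ≫ q) (g ≫ q) (h ≫ q) := by
  ext <;> simp [desc3]

lemma desc3_inj : desc3 (coprod.inl ≫ coprod.inl) (coprod.inr ≫ coprod.inl) coprod.inr =
    𝟙 ((X ⨿ Y) ⨿ Z) := by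
  ext <;> simp [desc3]

lemma desc3_zero_left (g : Y ⟶ W) (h : Z ⟶ W) :
    desc3 (0 : X ⟶ W) g h = coprod.map (r2 X Y) (𝟙 Z) ≫ coprod.desc g h := by
  ext <;> simp [desc3, r2]

lemma desc3_zero_mid (f : X ⟶ W) (h : Z ⟶ W) :
    desc3 f (0 : Y ⟶ W) h = coprod.map (r1 X Y) (𝟙 Z) ≫ coprod.desc f h := by
  ext <;> simp [desc3, r1]

lemma desc3_zero_right (f : X ⟶ W) (g : Y ⟶ W) :
    desc3 f g (0 : Z ⟶ W) = r1 (X ⨿ Y) Z ≫ coprod.desc f g := by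
  ext <;> simp [desc3, r1]

lemma desc3_zero : desc3 (0 : X ⟶ W) (0 : Y ⟶ W) (0 : Z ⟶ W) = 0 := by
  ext <;> simp [desc3]

variable (F : C ⥤ AddCommGrpCat.{w})

def deviation (f : X ⟶ W) (g : Y ⟶ W) (h : Z ⟶ W) :
    (F.obj ((X ⨿ Y) ⨿ Z) : Type w) →+ F.obj W :=
  (F.map (desc3 f g h)).hom - (F.map (desc3 f g 0)).hom - (F.map (desc3 f 0 h)).hom -
    (F.map (desc3 0 g h)).hom + (F.map (desc3 f 0 0)).hom + (F.map (desc3 0 g 0)).hom +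
    (F.map (desc3 0 0 h)).hom

lemma map_deviation_apply {W' : C} (f : X ⟶ W) (g : Y ⟶ W) (h : Z ⟶ W) (q : W ⟶ W')
    (v : F.obj ((X ⨿ Y) ⨿ Z)) :
    F.map q (deviation F f g h v) = deviation F (f ≫ q) (g ≫ q) (h ≫ q) v := by
  simp only [deviation, AddMonoidHom.add_apply, AddMonoidHom.sub_apply, map_add, map_sub,
    ← fmap_comp_apply, desc3_comp, zero_comp]

lemma map_desc3_deviation_inj_apply (f : X ⟶ W) (g : Y ⟶ W) (h : Z ⟶ W)
    (v : F.obj ((X ⨿ Y) ⨿ Z)) :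
    F.map (desc3 f g h)
        (deviation F (coprod.inl ≫ coprod.inl) (coprod.inr ≫ coprod.inl) coprod.inr v) =
      deviation F f g h v := by
  rw [map_deviation_apply]
  simp [desc3]

variable {F}

lemma deviation_zero_left (hF : Reduced F) (g : Y ⟶ W) (h : Z ⟶ W) :
    deviation F (0 : X ⟶ W) g h = 0 := by
  ext v
  simp [deviation, desc3_zero, map_zero_apply_of_reduced hF]
  abel

lemma deviation_zero_mid (hF : Reduced F) (f : X ⟶ W) (h : Z ⟶ W) :
    deviation F f (0 : Y ⟶ W) h = 0 := by
  ext v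
  simp [deviation, desc3_zero, map_zero_apply_of_reduced hF]
  abel

lemma deviation_zero_right (hF : Reduced F) (f : X ⟶ W) (g : Y ⟶ W) :
    deviation F f g (0 : Z ⟶ W) = 0 := by
  ext v
  simp [deviation, desc3_zero, map_zero_apply_of_reduced hF]
  abel

variable (F)

lemma map_desc3_apply_eq_zero_of_mem {v : F.obj ((X ⨿ Y) ⨿ Z)} (hv : v ∈ cr3sub F X Y Z)
    {f : X ⟶ W} {g : Y ⟶ W} {h : Z ⟶ W} (hfgh : f = 0 ∨ g = 0 ∨ h = 0) :
    F.map (desc3 f g h) v = 0 := by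
  obtain ⟨⟨hr₁, -⟩, hm₁, hm₂⟩ := hv
  rcases hfgh with rfl | rfl | rfl
  · rw [desc3_zero_left, fmap_comp_apply, show F.map _ v = 0 from hm₂, map_zero]
  · rw [desc3_zero_mid, fmap_comp_apply, show F.map _ v = 0 from hm₁, map_zero]
  · rw [desc3_zero_right, fmap_comp_apply, show F.map _ v = 0 from hr₁, map_zero]

lemma deviation_inj_apply_of_mem {v : F.obj ((X ⨿ Y) ⨿ Z)} (hv : v ∈ cr3sub F X Y Z) :
    deviation F (coprod.inl ≫ coprod.inl) (coprod.inr ≫ coprod.inl) coprod.inr v = v := by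
  simp [deviation, desc3_inj, map_desc3_apply_eq_zero_of_mem F hv]

variable {F}

lemma deviation_inj_apply_mem (hF : Reduced F) (u : F.obj ((X ⨿ Y) ⨿ Z)) :
    deviation F (coprod.inl ≫ coprod.inl) (coprod.inr ≫ coprod.inl) coprod.inr u ∈
      cr3sub F X Y Z := by
  refine ⟨⟨?_, ?_⟩, ?_, ?_⟩ <;>
  · change F.map _ _ = 0
    rw [map_deviation_apply]
    simp [r1, r2, deviation_zero_left hF, deviation_zero_mid hF, deviation_zero_right hF]

theorem range_deviation_inj (hF : Reduced F) :
    (deviation F (coprod.inl ≫ coprod.inl) (coprod.inr ≫ coprod.inl) coprod.inr).range =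
      cr3sub F X Y Z :=
  le_antisymm (by rintro _ ⟨u, rfl⟩; exact deviation_inj_apply_mem hF u)
    fun v hv => ⟨v, deviation_inj_apply_of_mem F hv⟩

end Deviation

lemma eps3Hom_alternating_sum_eq_deviation (F : C ⥤ AddCommGrpCat.{w}) (X : C) :
    eps3Hom F X true true true - eps3Hom F X true true false - eps3Hom F X true false true -
      eps3Hom F X false true true + eps3Hom F X true false false +
      eps3Hom F X false true false + eps3Hom F X false false true =
    deviation F (𝟙 X) (𝟙 X) (𝟙 X) := rfl

theorem statement11 (F : C ⥤ AddCommGrpCat.{w}) (hF : Reduced F) (X : C) :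
    imSk F 2 X = AddMonoidHom.range
      (eps3Hom F X true true true - eps3Hom F X true true false -
       eps3Hom F X true false true - eps3Hom F X false true true +
       eps3Hom F X true false false + eps3Hom F X false true false +
       eps3Hom F X false false true) := by
  let fold3 : (F.obj ((X ⨿ X) ⨿ X) : Type w) →+ F.obj X :=
    (F.map (desc3 (𝟙 X) (𝟙 X) (𝟙 X))).hom
  calc imSk F 2 X = (fold3.comp (crIncl F 1 (fun _ => X) X)).range := rfl
    _ = (cr3sub F X X X).map fold3 :=
      (AddMonoidHom.range_comp _ _).trans (congrArg _ (range_crIncl_one F _ X))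
    _ = (fold3.comp (deviation F (coprod.inl ≫ coprod.inl) (coprod.inr ≫ coprod.inl)
          coprod.inr)).range := by rw [AddMonoidHom.range_comp, range_deviation_inj hF]
    _ = (deviation F (𝟙 X) (𝟙 X) (𝟙 X)).range := by
      congr 1
      ext v
      exact map_desc3_deviation_inj_apply F _ _ _ v
    _ = _ := by rw [eps3Hom_alternating_sum_eq_deviation]

end

end QF
end

section
/- Let X, Y be objects of C, A an abelian group, and φ : C(X,Y) → A a normalized function (φ(0) = 0). Then φ is quadratic (i.e. its cross-effect cr₂(φ) : U_X(Y|Y) → A factors through the bilinearization projection t₁₁ : cr₂U_X(Y,Y) → T₁₁(cr₂U_X)(Y,Y)) if and only if the Z-linear extension φ-bar : U_X(Y) → A factors through the projection t₂ : U_X(Y) → T₂U_X(Y). -/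
/-
Both conditions say that a homomorphism vanishes on a subgroup, and the two subgroups correspond
under `S₂ : cr₂U_X(Y,Y) → U_X(Y)`. On generators one checks `cr₂(φ) = φ̄ ∘ S₂`. For any functor
`F`, `S₂` carries the image of `S₂` in the first variable onto the image of `S₃`, because
`∇² ∘ (∇² ∨ 1)` is the threefold fold map, and carries the image of `S₂` in the second variable
into it after reassociating `Y ∨ (Y ∨ Y)`. Hence `S₂` maps `N₁ + N₂` onto `im S₃`, and
`cr₂(φ)` kills `N₁ + N₂` iff `φ̄` kills `im S₃`.
-/

open CategoryTheory Limits ZeroObject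
open scoped TensorProduct

set_option linter.unusedSectionVars false

universe w v u

namespace QF

variable {C : Type u} [Category.{v} C] [HasZeroObject C] [HasZeroMorphisms C]
  [HasBinaryCoproducts C]

noncomputable section

section QuadraticMaps

variable {A : Type w} [AddCommGroup A]

/-- The `ℤ`-linear extension of a function `φ : C(X,Y) → A` to `ℤ[C(X,Y)]`. -/
def philift {X Y : C} (φ : (X ⟶ Y) → A) : ((X ⟶ Y) →₀ ℤ) →+ A :=
  Finsupp.liftAddHom (fun f => (zmultiplesHom A) (φ f))

/-- The `ℤ`-linear extension `φ̄ : U_X(Y) →+ A` of a normalized function `φ`. -/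
def phibar {X Y : C} (φ : (X ⟶ Y) → A) (hφ : φ 0 = 0) : UObj X Y →+ A :=
  QuotientAddGroup.lift (USub X Y) (philift φ) (by
    intro x hx
    refine AddSubgroup.closure_induction ?_ ?_ ?_ ?_ hx
    · rintro y rfl
      simp [philift, hφ]
    · simp
    · intro a b _ _ h1 h2
      simp only [AddMonoidHom.mem_ker] at h1 h2
      simp [map_add, h1, h2]
    · intro a _ h1
      simp only [AddMonoidHom.mem_ker] at h1
      simp [map_neg, h1])

/-- The second cross-effect of `φ` on `ℤ[C(X, Y∨Y)]`:
the linear extension of `ξ ↦ φ(∇²ξ) − φ(r₁ξ) − φ(r₂ξ)`. -/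
def crphilift {X Y : C} (φ : (X ⟶ Y) → A) : ((X ⟶ Y ⨿ Y) →₀ ℤ) →+ A :=
  Finsupp.liftAddHom (fun ξ => (zmultiplesHom A)
    (φ (ξ ≫ fold Y) - φ (ξ ≫ r1 Y Y) - φ (ξ ≫ r2 Y Y)))

/-- The descent of `crphilift` to `U_X(Y ∨ Y)`. -/
def crphibar {X Y : C} (φ : (X ⟶ Y) → A) (hφ : φ 0 = 0) : UObj X (Y ⨿ Y) →+ A :=
  QuotientAddGroup.lift (USub X (Y ⨿ Y)) (crphilift φ) (by
    intro x hx
    refine AddSubgroup.closure_induction ?_ ?_ ?_ ?_ hx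
    · rintro y rfl
      simp [crphilift, hφ]
    · simp
    · intro a b _ _ h1 h2
      simp only [AddMonoidHom.mem_ker] at h1 h2
      simp [map_add, h1, h2]
    · intro a _ h1
      simp only [AddMonoidHom.mem_ker] at h1
      simp [map_neg, h1])

/-- The second cross-effect `cr₂(φ) : cr₂U_X(Y,Y) →+ A` of a normalized function `φ`. -/
def cr2phi {X Y : C} (φ : (X ⟶ Y) → A) (hφ : φ 0 = 0) :
    (cr2sub (UFun X) Y Y : Type v) →+ A :=
  (crphibar φ hφ).comp (cr2sub (UFun X) Y Y).subtype

lemma _root_.QuotientAddGroup.exists_lift_iff_le_ker {G M : Type*} [AddCommGroup G]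
    [AddCommGroup M] (N : AddSubgroup G) (f : G →+ M) :
    (∃ ψ : G ⧸ N →+ M, ∀ z : G, ψ z = f z) ↔ N ≤ f.ker := by
  constructor
  · rintro ⟨ψ, hψ⟩ z hz
    rw [AddMonoidHom.mem_ker, ← hψ, (QuotientAddGroup.eq_zero_iff z).2 hz, map_zero]
  · exact fun h => ⟨QuotientAddGroup.lift N f h, fun _ => rfl⟩

lemma coprod_map_fold_comp_fold (Y : C) :
    coprod.map (fold Y) (𝟙 Y) ≫ fold Y = coprod.desc (fold Y) (𝟙 Y) := by
  apply coprod.hom_ext <;> simp [fold]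

def S2 (F : C ⥤ AddCommGrpCat.{w}) (Y : C) : (cr2Bif F).obj (Y, Y) →+ F.obj Y :=
  (F.map (fold Y)).hom.comp (cr2sub F Y Y).subtype

section CrossEffectImages

variable {F : C ⥤ AddCommGrpCat.{w}}

lemma fold_mem_imS_one {Y : C} {v : F.obj ((Y ⨿ Y) ⨿ Y)} (hv : v ∈ cr2sub F (Y ⨿ Y) Y)
    (h1 : F.map (coprod.map (r1 Y Y) (𝟙 Y)) v = 0) (h2 : F.map (coprod.map (r2 Y Y) (𝟙 Y)) v = 0) :
    F.map (coprod.desc (fold Y) (𝟙 Y)) v ∈ imS F 1 Y :=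
  ⟨⟨⟨v, hv⟩, Subtype.ext h1, Subtype.ext h2⟩, rfl⟩

lemma map_S2_N1 (Y : C) : (N1 (cr2Bif F) Y Y).map (S2 F Y) = imS F 1 Y := by
  ext u
  constructor
  · rintro ⟨_, ⟨w, hw, rfl⟩, rfl⟩
    have := fold_mem_imS_one w.2 (congrArg Subtype.val hw.1) (congrArg Subtype.val hw.2)
    rwa [← coprod_map_fold_comp_fold, fmap_comp_apply] at this
  · rintro ⟨z, rfl⟩
    refine ⟨_, ⟨z.1, z.2, rfl⟩, ?_⟩
    show F.map (fold Y) (F.map (coprod.map (fold Y) (𝟙 Y)) z.1.1) = _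
    rw [← fmap_comp_apply, coprod_map_fold_comp_fold]
    rfl

lemma map_S2_N2_le (Y : C) : (N2 (cr2Bif F) Y Y).map (S2 F Y) ≤ imS F 1 Y := by
  rintro _ ⟨_, ⟨w, hw, rfl⟩, rfl⟩
  -- reassociating `Y ∨ (Y ∨ Y)` turns an element of `N2` into one of `cr₃F(Y,Y,Y)`
  let σ := (coprod.associator Y Y Y).inv
  have hr1 : σ ≫ r1 (Y ⨿ Y) Y = coprod.map (𝟙 Y) (r1 Y Y) := by
    ext <;> simp [σ, r1, coprod.inl_desc, coprod.inr_desc]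
  have hr2 : σ ≫ r2 (Y ⨿ Y) Y = r2 Y (Y ⨿ Y) ≫ r2 Y Y := by
    ext <;> simp [σ, r2, coprod.inl_desc, coprod.inr_desc]
  have hmr1 : σ ≫ coprod.map (r1 Y Y) (𝟙 Y) = coprod.map (𝟙 Y) (r2 Y Y) := by
    ext <;> simp [σ, r1, r2, coprod.inl_desc, coprod.inr_desc]
  have hmr2 : σ ≫ coprod.map (r2 Y Y) (𝟙 Y) = r2 Y (Y ⨿ Y) := by
    ext <;> simp [σ, r2, coprod.inl_desc, coprod.inr_desc]
  have hfold : σ ≫ coprod.desc (fold Y) (𝟙 Y) = coprod.map (𝟙 Y) (fold Y) ≫ fold Y := by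
    ext <;> simp [σ, fold, coprod.inl_desc, coprod.inr_desc]
  have h := fold_mem_imS_one (F := F) (v := F.map σ w.1)
    (mem_cr2sub.2 ⟨by rw [← fmap_comp_apply, hr1]; exact congrArg Subtype.val hw.1,
      by rw [← fmap_comp_apply, hr2, fmap_comp_apply, w.2.2, map_zero]⟩)
    (by rw [← fmap_comp_apply, hmr1]; exact congrArg Subtype.val hw.2)
    (by rw [← fmap_comp_apply, hmr2]; exact w.2.2)
  rwa [← fmap_comp_apply, hfold, fmap_comp_apply] at h

lemma map_S2_N1_sup_N2 (Y : C) :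
    (N1 (cr2Bif F) Y Y ⊔ N2 (cr2Bif F) Y Y).map (S2 F Y) = imSk F 2 Y := by
  rw [AddSubgroup.map_sup, map_S2_N1, sup_eq_left.2 (map_S2_N2_le Y)]
  rfl

end CrossEffectImages

lemma uOf_map {X Z Z' : C} (g : Z ⟶ Z') (ξ : X ⟶ Z) :
    (UFun X).map g (uOf ξ) = uOf (ξ ≫ g) := by
  show QuotientAddGroup.mk _ = _
  rw [Finsupp.mapDomain.addMonoidHom_apply, Finsupp.mapDomain_single]
  rfl

lemma phibar_uOf {X Y : C} (φ : (X ⟶ Y) → A) (hφ : φ 0 = 0) (f : X ⟶ Y) :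
    phibar φ hφ (uOf f) = φ f := by
  show philift φ (Finsupp.single f 1) = φ f
  simp [philift]

lemma crphibar_uOf {X Y : C} (φ : (X ⟶ Y) → A) (hφ : φ 0 = 0) (ξ : X ⟶ Y ⨿ Y) :
    crphibar φ hφ (uOf ξ) = φ (ξ ≫ fold Y) - φ (ξ ≫ r1 Y Y) - φ (ξ ≫ r2 Y Y) := by
  show crphilift φ (Finsupp.single ξ 1) = _
  simp [crphilift]

lemma UObj.hom_ext {X Z : C} {f g : UObj X Z →+ A} (h : ∀ ξ : X ⟶ Z, f (uOf ξ) = g (uOf ξ)) :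
    f = g :=
  QuotientAddGroup.addMonoidHom_ext _ (Finsupp.addHom_ext' fun ξ => AddMonoidHom.ext_int (h ξ))

lemma crphibar_apply {X Y : C} (φ : (X ⟶ Y) → A) (hφ : φ 0 = 0) (x : UObj X (Y ⨿ Y)) :
    crphibar φ hφ x = phibar φ hφ ((UFun X).map (fold Y) x)
      - phibar φ hφ ((UFun X).map (r1 Y Y) x) - phibar φ hφ ((UFun X).map (r2 Y Y) x) := by
  let u : (Y ⨿ Y ⟶ Y) → UObj X (Y ⨿ Y) →+ UObj X Y := fun g => ((UFun X).map g).hom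
  have h : crphibar φ hφ = (phibar φ hφ).comp (u (fold Y)) - (phibar φ hφ).comp (u (r1 Y Y))
      - (phibar φ hφ).comp (u (r2 Y Y)) :=
    UObj.hom_ext fun ξ => by
      show _ = phibar φ hφ ((UFun X).map (fold Y) (uOf ξ))
        - phibar φ hφ ((UFun X).map (r1 Y Y) (uOf ξ)) - phibar φ hφ ((UFun X).map (r2 Y Y) (uOf ξ))
      rw [uOf_map, uOf_map, uOf_map, crphibar_uOf, phibar_uOf, phibar_uOf, phibar_uOf]
  exact DFunLike.congr_fun h x

lemma cr2phi_eq_comp_S2 {X Y : C} (φ : (X ⟶ Y) → A) (hφ : φ 0 = 0) :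
    cr2phi φ hφ = (phibar φ hφ).comp (S2 (UFun X) Y) := by
  ext z
  obtain ⟨h1, h2⟩ := mem_cr2sub.1 z.2
  refine (crphibar_apply φ hφ z.1).trans ?_
  rw [h1, h2]
  show _ - phibar φ hφ 0 - phibar φ hφ 0 = _
  rw [map_zero, sub_zero, sub_zero]
  rfl

theorem statement12 {X Y : C} (φ : (X ⟶ Y) → A) (hφ : φ 0 = 0) :
    (∃ ψ : T11Obj (cr2Bif (UFun X)) Y Y →+ A,
        ∀ z : (cr2Bif (UFun X)).obj (Y, Y),
          ψ (QuotientAddGroup.mk z) = cr2phi φ hφ z) ↔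
    (∃ χ : TObj (UFun X) 2 Y →+ A,
        ∀ u : UObj X Y, χ (QuotientAddGroup.mk u) = phibar φ hφ u) := by
  refine (QuotientAddGroup.exists_lift_iff_le_ker _ (cr2phi φ hφ)).trans ?_
  refine Iff.trans ?_
    (QuotientAddGroup.exists_lift_iff_le_ker (imSk (UFun X) 2 Y) (phibar φ hφ)).symm
  rw [cr2phi_eq_comp_S2, ← map_S2_N1_sup_N2, AddSubgroup.map_le_iff_le_comap]
  rfl

end QuadraticMaps

end

end QF
end

section
/- Let G be a group and H, K two subsets of G containing 1 such that each g ∈ G admits a unique decomposition g = h_g · k_g with h_g ∈ H and k_g ∈ K. Then the map φ : IH ⊕ IK ⊕ (IH ⊗ IK) → IG given by φ(h−1, 0, 0) = h−1, φ(0, k−1, 0) = k−1 and φ(0, 0, (h′−1) ⊗ (k′−1)) = (h′−1)·(k′−1) is an isomorphism of Z-modules. -/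
/-!
Write `g = h_g k_g` for the factorization of `g ∈ G`. The additive map
`ψ : ℤ[G] → IH ⊕ IK ⊕ (IH ⊗ IK)`, `g ↦ (h_g - 1, k_g - 1, (h_g - 1) ⊗ (k_g - 1))`,
is inverse to `φ` on `IG`. On one side,
`φ (ψ g) = (h_g - 1) + (k_g - 1) + (h_g - 1)(k_g - 1) = g - 1`,
so `φ ∘ ψ = id - ε`. On the other, `ψ ∘ φ = id` is checked on generators: uniqueness of
the factorizations `h = h · 1`, `k = 1 · k` and `hk = h · k` makes `ψ` send `h - 1`,
`k - 1` and `(h - 1)(k - 1) = (hk - 1) - (h - 1) - (k - 1)` to the corresponding summands.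
-/

open scoped TensorProduct

universe u

namespace QF

variable (G : Type u) [Group G]

/-- The augmentation map `ε : ℤ[G] → ℤ`. -/
noncomputable def aug : MonoidAlgebra ℤ G →+* ℤ :=
  ((MonoidAlgebra.lift ℤ ℤ G) 1).toRingHom

/-- The augmentation ideal `IG = ker ε`. -/
noncomputable def augIdeal : Ideal (MonoidAlgebra ℤ G) := RingHom.ker (aug G)

/-- For a subset `S ⊆ G`, the subgroup `IS` of `ℤ[G]` generated by the
elements `s − 1`, `s ∈ S`. -/
noncomputable def ISet (S : Set G) : AddSubgroup (MonoidAlgebra ℤ G) :=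
  AddSubgroup.closure ((fun s => MonoidAlgebra.of ℤ G s - 1) '' S)

lemma of_sub_one_mem (g : G) : MonoidAlgebra.of ℤ G g - 1 ∈ (augIdeal G).toAddSubgroup := by
  simp [augIdeal, aug, RingHom.mem_ker, map_sub, MonoidAlgebra.lift_of]

lemma ISet_le (S : Set G) : ISet G S ≤ (augIdeal G).toAddSubgroup := by
  rw [ISet, AddSubgroup.closure_le]
  rintro x ⟨s, _, rfl⟩
  exact of_sub_one_mem G s

/-- Multiplication in `ℤ[G]` as a bilinear map `IH × IK → IG`. -/
noncomputable def mulBil (Hs Ks : Set G) :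
    ↥(ISet G Hs) →ₗ[ℤ] ↥(ISet G Ks) →ₗ[ℤ] ↥((augIdeal G).toAddSubgroup) :=
  LinearMap.mk₂ ℤ
    (fun a b => ⟨(a : MonoidAlgebra ℤ G) * (b : MonoidAlgebra ℤ G), by
      have ha : aug G (a : MonoidAlgebra ℤ G) = 0 := by
        have := ISet_le G Hs a.2
        simpa [augIdeal, RingHom.mem_ker] using this
      simp [augIdeal, RingHom.mem_ker, map_mul, ha]⟩)
    (by intro a a' b; apply Subtype.ext; simp [add_mul])
    (by intro c a b; apply Subtype.ext; simp [smul_mul_assoc, mul_assoc])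
    (by intro a b b'; apply Subtype.ext; simp [mul_add])
    (by intro c a b
        apply Subtype.ext
        show (a : MonoidAlgebra ℤ G) * ((c • b : ↥(ISet G Ks)) : MonoidAlgebra ℤ G) =
          c • ((a : MonoidAlgebra ℤ G) * (b : MonoidAlgebra ℤ G))
        simp only [AddSubgroupClass.coe_zsmul, zsmul_eq_mul]
        rw [← mul_assoc, ← (Int.cast_commute c ((a : MonoidAlgebra ℤ G))).eq, mul_assoc])

/-- The map `φ : IH ⊕ IK ⊕ (IH ⊗ IK) → IG` given by the two inclusions and by
`(h′−1) ⊗ (k′−1) ↦ (h′−1)·(k′−1)`. -/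
noncomputable def phi17 (Hs Ks : Set G) :
    (↥(ISet G Hs) × ↥(ISet G Ks) × (↥(ISet G Hs) ⊗[ℤ] ↥(ISet G Ks))) →+
      ↥((augIdeal G).toAddSubgroup) :=
  ((AddSubgroup.inclusion (ISet_le G Hs)).comp
      (AddMonoidHom.fst _ _)) +
  ((AddSubgroup.inclusion (ISet_le G Ks)).comp
      ((AddMonoidHom.fst _ _).comp (AddMonoidHom.snd _ _))) +
  ((TensorProduct.lift (mulBil G Hs Ks)).toAddMonoidHom.comp
      ((AddMonoidHom.snd _ _).comp (AddMonoidHom.snd _ _)))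

variable {G}

section Generators

variable {S : Set G} {M : Type*} [AddCommGroup M]

noncomputable def subOne {s : G} (hs : s ∈ S) : ISet G S :=
  ⟨MonoidAlgebra.of ℤ G s - 1, AddSubgroup.subset_closure ⟨s, hs, rfl⟩⟩

@[simp]
lemma coe_subOne {s : G} (hs : s ∈ S) :
    (subOne hs : MonoidAlgebra ℤ G) = MonoidAlgebra.of ℤ G s - 1 :=
  rfl

lemma subOne_one (h1 : (1 : G) ∈ S) : subOne h1 = 0 :=
  Subtype.ext (by rw [coe_subOne, map_one, sub_self]; rfl)

lemma ISet.linearMap_ext {f g : ISet G S →ₗ[ℤ] M}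
    (h : ∀ s (hs : s ∈ S), f (subOne hs) = g (subOne hs)) : f = g := by
  refine LinearMap.toAddMonoidHom_injective <|
    AddMonoidHom.eq_of_eqOn_dense AddSubgroup.closure_closure_coe_preimage ?_
  rintro x ⟨s, hs, hx⟩
  obtain rfl : x = subOne hs := Subtype.ext hx.symm
  exact h s hs

end Generators

lemma aug_of (g : G) : aug G (MonoidAlgebra.of ℤ G g) = 1 := by
  simp [aug]

lemma sub_one_mul_sub_one {R : Type*} [Ring R] (a b : R) :
    (a - 1) * (b - 1) = (a * b - 1) - (a - 1) - (b - 1) := by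
  noncomm_ring

section Factorization

variable {Hs Ks : Set G}
  (huniq : ∀ g : G, ∃! p : G × G, p.1 ∈ Hs ∧ p.2 ∈ Ks ∧ p.1 * p.2 = g)

noncomputable def factor (g : G) : G × G :=
  (huniq g).exists.choose

lemma factor_spec (g : G) :
    (factor huniq g).1 ∈ Hs ∧ (factor huniq g).2 ∈ Ks ∧
      (factor huniq g).1 * (factor huniq g).2 = g :=
  (huniq g).exists.choose_spec

lemma factor_mul {h k : G} (hh : h ∈ Hs) (hk : k ∈ Ks) : factor huniq (h * k) = (h, k) :=
  (huniq _).unique (factor_spec huniq _) ⟨hh, hk, rfl⟩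

noncomputable def retraction :
    MonoidAlgebra ℤ G →ₗ[ℤ] ISet G Hs × ISet G Ks × (ISet G Hs ⊗[ℤ] ISet G Ks) :=
  (MonoidAlgebra.basis G ℤ).constr ℤ fun g =>
    (subOne (factor_spec huniq g).1, subOne (factor_spec huniq g).2.1,
      subOne (factor_spec huniq g).1 ⊗ₜ subOne (factor_spec huniq g).2.1)

lemma retraction_of (g : G) :
    retraction huniq (MonoidAlgebra.of ℤ G g) =
      (subOne (factor_spec huniq g).1, subOne (factor_spec huniq g).2.1,
        subOne (factor_spec huniq g).1 ⊗ₜ subOne (factor_spec huniq g).2.1) := by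
  rw [MonoidAlgebra.of_apply, ← MonoidAlgebra.basis_apply, retraction,
    Module.Basis.constr_basis]

lemma retraction_of_mul {h k : G} (hh : h ∈ Hs) (hk : k ∈ Ks) :
    retraction huniq (MonoidAlgebra.of ℤ G (h * k)) =
      (subOne hh, subOne hk, subOne hh ⊗ₜ subOne hk) := by
  have ha : subOne (factor_spec huniq (h * k)).1 = subOne hh :=
    Subtype.ext (by simp only [coe_subOne, factor_mul huniq hh hk])
  have hb : subOne (factor_spec huniq (h * k)).2.1 = subOne hk :=
    Subtype.ext (by simp only [coe_subOne, factor_mul huniq hh hk])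
  rw [retraction_of, ha, hb]

lemma coe_phi17 (m : ISet G Hs × ISet G Ks × (ISet G Hs ⊗[ℤ] ISet G Ks)) :
    (phi17 G Hs Ks m : MonoidAlgebra ℤ G) =
      m.1 + m.2.1 + (TensorProduct.lift (mulBil G Hs Ks) m.2.2 : MonoidAlgebra ℤ G) :=
  rfl

lemma retraction_one (h1H : (1 : G) ∈ Hs) (h1K : (1 : G) ∈ Ks) : retraction huniq 1 = 0 := by
  have h := retraction_of_mul huniq h1H h1K
  rw [mul_one, map_one, subOne_one, subOne_one, TensorProduct.tmul_zero] at h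
  exact h

lemma retraction_comp_subtype_left (h1H : (1 : G) ∈ Hs) (h1K : (1 : G) ∈ Ks) :
    retraction huniq ∘ₗ (ISet G Hs).subtype.toIntLinearMap = LinearMap.inl ℤ _ _ := by
  refine ISet.linearMap_ext fun h hh => ?_
  have h_of := retraction_of_mul huniq hh h1K
  rw [mul_one, subOne_one, TensorProduct.tmul_zero] at h_of
  simp only [LinearMap.comp_apply, AddMonoidHom.coe_toIntLinearMap, AddSubgroup.coe_subtype,
    coe_subOne, map_sub, h_of, retraction_one huniq h1H h1K, sub_zero]
  rfl

lemma retraction_comp_subtype_right (h1H : (1 : G) ∈ Hs) (h1K : (1 : G) ∈ Ks) :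
    retraction huniq ∘ₗ (ISet G Ks).subtype.toIntLinearMap =
      LinearMap.inr ℤ _ _ ∘ₗ LinearMap.inl ℤ _ _ := by
  refine ISet.linearMap_ext fun k hk => ?_
  have h_of := retraction_of_mul huniq h1H hk
  rw [one_mul, subOne_one, TensorProduct.zero_tmul] at h_of
  simp only [LinearMap.comp_apply, AddMonoidHom.coe_toIntLinearMap, AddSubgroup.coe_subtype,
    coe_subOne, map_sub, h_of, retraction_one huniq h1H h1K, sub_zero]
  rfl

lemma retraction_comp_lift_mulBil (h1H : (1 : G) ∈ Hs) (h1K : (1 : G) ∈ Ks) :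
    retraction huniq ∘ₗ (augIdeal G).toAddSubgroup.subtype.toIntLinearMap ∘ₗ
        TensorProduct.lift (mulBil G Hs Ks) =
      LinearMap.inr ℤ _ _ ∘ₗ LinearMap.inr ℤ _ _ := by
  refine TensorProduct.ext (ISet.linearMap_ext fun h hh => ISet.linearMap_ext fun k hk => ?_)
  have h_left : retraction huniq (MonoidAlgebra.of ℤ G h - 1) = (subOne hh, 0, 0) :=
    LinearMap.congr_fun (retraction_comp_subtype_left huniq h1H h1K) (subOne hh)
  have h_right : retraction huniq (MonoidAlgebra.of ℤ G k - 1) = (0, subOne hk, 0) :=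
    LinearMap.congr_fun (retraction_comp_subtype_right huniq h1H h1K) (subOne hk)
  change retraction huniq ((MonoidAlgebra.of ℤ G h - 1) * (MonoidAlgebra.of ℤ G k - 1)) = _
  rw [sub_one_mul_sub_one, ← map_mul, map_sub, map_sub, map_sub, retraction_of_mul huniq hh hk,
    retraction_one huniq h1H h1K, h_left, h_right]
  simp

lemma retraction_phi17 (h1H : (1 : G) ∈ Hs) (h1K : (1 : G) ∈ Ks)
    (m : ISet G Hs × ISet G Ks × (ISet G Hs ⊗[ℤ] ISet G Ks)) :
    retraction huniq (phi17 G Hs Ks m) = m := by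
  obtain ⟨a, b, t⟩ := m
  have ha : retraction huniq a = (a, 0, 0) :=
    LinearMap.congr_fun (retraction_comp_subtype_left huniq h1H h1K) a
  have hb : retraction huniq b = (0, b, 0) :=
    LinearMap.congr_fun (retraction_comp_subtype_right huniq h1H h1K) b
  have ht : retraction huniq (TensorProduct.lift (mulBil G Hs Ks) t : MonoidAlgebra ℤ G) =
      (0, 0, t) :=
    LinearMap.congr_fun (retraction_comp_lift_mulBil huniq h1H h1K) t
  rw [coe_phi17, map_add, map_add, ha, hb, ht]
  simp

lemma phi17_retraction (x : MonoidAlgebra ℤ G) :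
    (phi17 G Hs Ks (retraction huniq x) : MonoidAlgebra ℤ G) =
      x - (aug G x : MonoidAlgebra ℤ G) := by
  suffices (augIdeal G).toAddSubgroup.subtype.toIntLinearMap ∘ₗ
      (phi17 G Hs Ks).toIntLinearMap ∘ₗ retraction huniq =
      LinearMap.id - Algebra.linearMap ℤ _ ∘ₗ (aug G).toAddMonoidHom.toIntLinearMap from
    LinearMap.congr_fun this x
  refine (MonoidAlgebra.basis G ℤ).ext fun g => ?_
  obtain ⟨-, -, hmul⟩ := factor_spec huniq g
  rw [MonoidAlgebra.basis_apply, ← MonoidAlgebra.of_apply]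
  simp only [LinearMap.comp_apply, AddMonoidHom.coe_toIntLinearMap, AddSubgroup.coe_subtype,
    retraction_of, coe_phi17, TensorProduct.lift.tmul]
  change (MonoidAlgebra.of ℤ G (factor huniq g).1 - 1) +
      (MonoidAlgebra.of ℤ G (factor huniq g).2 - 1) +
      (MonoidAlgebra.of ℤ G (factor huniq g).1 - 1) *
        (MonoidAlgebra.of ℤ G (factor huniq g).2 - 1) =
    MonoidAlgebra.of ℤ G g - ((aug G (MonoidAlgebra.of ℤ G g) : ℤ) : MonoidAlgebra ℤ G)
  rw [sub_one_mul_sub_one, ← map_mul, hmul, aug_of, Int.cast_one]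
  abel

end Factorization

variable (G)

theorem statement17 (Hs Ks : Set G) (h1H : (1 : G) ∈ Hs) (h1K : (1 : G) ∈ Ks)
    (huniq : ∀ g : G, ∃! p : G × G, p.1 ∈ Hs ∧ p.2 ∈ Ks ∧ p.1 * p.2 = g) :
    Function.Bijective (phi17 G Hs Ks) := by
  refine ⟨Function.Injective.of_comp (f := Subtype.val)
    (Function.LeftInverse.injective (retraction_phi17 huniq h1H h1K)),
    fun x => ⟨retraction huniq x, Subtype.ext ?_⟩⟩
  rw [phi17_retraction, show aug G x = 0 from x.2, Int.cast_zero, sub_zero]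

end QF
end

section
/- Let G and H be groups. Then for all g ∈ G, h ∈ H and all integers n, the following identity holds in T₁₁(cr₂(Id_Gr))(G,H): t₁₁( ((i₁g)(i₂h))ⁿ (i₂h)^{−n} (i₁g)^{−n} ) = t₁₁( [i₂h, i₁g]^{n(n−1)/2} ), where the products are taken in the free product G ∗ H and [a,b] = aba^{−1}b^{−1}. -/
open Monoid
open scoped TensorProduct
open scoped commutatorElement

universe u

namespace QF

section FreeProducts

variable (G H : Type u) [Group G] [Group H]

/-- The image of `S₂` applied in the first variable of the bifunctor `cr₂(Id)`. -/
def N1g : Subgroup (Coprod G H) :=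
  Subgroup.map (Coprod.map (gfold G) (MonoidHom.id H))
    (cr2Id (Coprod G G) H ⊓ (Coprod.map (gr1 G G) (MonoidHom.id H)).ker
      ⊓ (Coprod.map (gr2 G G) (MonoidHom.id H)).ker)

/-- The image of `S₂` applied in the second variable of the bifunctor `cr₂(Id)`. -/
def N2g : Subgroup (Coprod G H) :=
  Subgroup.map (Coprod.map (MonoidHom.id G) (gfold H))
    (cr2Id G (Coprod H H) ⊓ (Coprod.map (MonoidHom.id G) (gr1 H H)).ker
      ⊓ (Coprod.map (MonoidHom.id G) (gr2 H H)).ker)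

/-- The bilinearization `T₁₁(cr₂(Id_Gr))(G,H)`: the quotient of `cr₂(Id)(G,H)` by the
normal subgroup generated by the images of `S₂` applied in each variable. -/
def T11crId := ↥(cr2Id G H) ⧸
  Subgroup.normalClosure
    ((((N1g G H ⊔ N2g G H).subgroupOf (cr2Id G H)) : Subgroup ↥(cr2Id G H)) : Set ↥(cr2Id G H))

noncomputable instance : Group (T11crId G H) := QuotientGroup.Quotient.group _

lemma comm_zpow_mem (g : G) (h : H) (k : ℤ) :
    ⁅(Coprod.inr h : Coprod G H), Coprod.inl g⁆ ^ k ∈ cr2Id G H := by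
  refine Subgroup.zpow_mem _ ?_ k
  refine ⟨?_, ?_⟩ <;>
  · show _ = 1
    rw [map_commutatorElement]
    simp [gr1, gr2]

lemma elt19_mem (g : G) (h : H) (n : ℤ) :
    ((Coprod.inl g : Coprod G H) * Coprod.inr h) ^ n * (Coprod.inr h : Coprod G H) ^ (-n) *
      (Coprod.inl g : Coprod G H) ^ (-n) ∈ cr2Id G H := by
  refine ⟨?_, ?_⟩ <;>
  · show _ = 1
    simp [gr1, gr2]

/-! Write `a = i₁g`, `b = i₂h`, `c = [b, a]` and `w n = (ab)ⁿ b⁻ⁿ a⁻ⁿ`. In any group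
`w (n + 1) = w n · [aⁿ, [bⁿ, a]] · [bⁿ, a]`. In `T₁₁` the middle factor vanishes: putting the two
occurrences of `g` into different copies of `G` exhibits it as an `S₂`-image in the first variable.
In the same way, putting `h₁` and `h₂` into different copies of `H` shows that `h ↦ [i₂h, a]`
becomes a homomorphism. Hence `w (n + 1) = w n · cⁿ` in `T₁₁`, and `w n = c ^ (n(n-1)/2)` by
induction on `n`. -/

lemma mul_zpow_add_one_mul_zpow_neg {M : Type*} [Group M] (a b : M) (n : ℤ) :
    (a * b) ^ (n + 1) * b ^ (-(n + 1)) * a ^ (-(n + 1)) =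
      (a * b) ^ n * b ^ (-n) * a ^ (-n) * ⁅a ^ n, ⁅b ^ n, a⁆⁆ * ⁅b ^ n, a⁆ := by
  rw [zpow_add_one]
  simp only [commutatorElement_def]
  group

lemma eq_zpow_mul_sub_one_div_two {M : Type*} [Group M] (c : M) {f : ℤ → M} (h₀ : f 0 = 1)
    (hsucc : ∀ n, f (n + 1) = f n * c ^ n) (n : ℤ) : f n = c ^ (n * (n - 1) / 2) := by
  have hexp (m : ℤ) : (m + 1) * (m + 1 - 1) / 2 = m * (m - 1) / 2 + m := by
    rw [show (m + 1) * (m + 1 - 1) = m * (m - 1) + m * 2 by ring,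
      Int.add_mul_ediv_right _ _ two_ne_zero]
  induction n using Int.induction_on with
  | zero => simpa using h₀
  | succ k ih => rw [hsucc, ih, ← zpow_add, hexp]
  | pred k ih =>
    rw [show -(k : ℤ) = -k - 1 + 1 by ring, hexp] at ih
    rw [eq_mul_inv_of_mul_eq (hsucc _).symm, ih, ← zpow_neg, ← zpow_add, add_neg_cancel_right]

section

variable {G H}

lemma mk_eq_one_of_mem_sup {z : cr2Id G H} (hz : (z : Coprod G H) ∈ N1g G H ⊔ N2g G H) :
    (QuotientGroup.mk z : T11crId G H) = 1 :=
  (QuotientGroup.eq_one_iff _).mpr (Subgroup.subset_normalClosure hz)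

lemma mk_eq_mk_of_mul_inv_mem_sup {x y : cr2Id G H}
    (hxy : (x : Coprod G H) * (y : Coprod G H)⁻¹ ∈ N1g G H ⊔ N2g G H) :
    (QuotientGroup.mk x : T11crId G H) = QuotientGroup.mk y := by
  rw [← mul_inv_eq_one, ← QuotientGroup.mk_inv, ← QuotientGroup.mk_mul]
  exact mk_eq_one_of_mem_sup hxy

lemma commutator_inr_inl_mem_cr2Id (g : G) (h : H) :
    ⁅(Coprod.inr h : Coprod G H), Coprod.inl g⁆ ∈ cr2Id G H := by
  simpa using comm_zpow_mem G H g h 1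

lemma commutator_inl_commutator_mem_cr2Id (x y : G) (z : H) :
    ⁅(Coprod.inl x : Coprod G H), ⁅(Coprod.inr z : Coprod G H), Coprod.inl y⁆⁆ ∈ cr2Id G H := by
  constructor <;> simp [gr1, gr2, commutatorElement_def]

lemma commutator_inl_commutator_mem_N1g (x y : G) (z : H) :
    ⁅(Coprod.inl x : Coprod G H), ⁅(Coprod.inr z : Coprod G H), Coprod.inl y⁆⁆ ∈ N1g G H := by
  refine ⟨⁅(Coprod.inl (Coprod.inl x) : Coprod (Coprod G G) H),
      ⁅(Coprod.inr z : Coprod (Coprod G G) H), Coprod.inl (Coprod.inr y)⁆⁆,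
    ⟨⟨⟨?_, ?_⟩, ?_⟩, ?_⟩, ?_⟩ <;>
  simp [gr1, gr2, gfold, commutatorElement_def]

lemma commutator_inr_mul_mem_N2g (g : G) (h₁ h₂ : H) :
    ⁅(Coprod.inr (h₁ * h₂) : Coprod G H), Coprod.inl g⁆ *
      ⁅(Coprod.inr h₂ : Coprod G H), Coprod.inl g⁆⁻¹ *
      ⁅(Coprod.inr h₁ : Coprod G H), Coprod.inl g⁆⁻¹ ∈ N2g G H := by
  refine ⟨⁅(Coprod.inr (Coprod.inl h₁) * Coprod.inr (Coprod.inr h₂) : Coprod G (Coprod H H)),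
        Coprod.inl g⁆ *
      ⁅(Coprod.inr (Coprod.inr h₂) : Coprod G (Coprod H H)), Coprod.inl g⁆⁻¹ *
      ⁅(Coprod.inr (Coprod.inl h₁) : Coprod G (Coprod H H)), Coprod.inl g⁆⁻¹,
    ⟨⟨⟨?_, ?_⟩, ?_⟩, ?_⟩, ?_⟩ <;>
  simp [gr1, gr2, gfold, commutatorElement_def]

noncomputable def t11CommutatorHom (g : G) : H →* T11crId G H :=
  MonoidHom.mk' (fun h => (QuotientGroup.mk ⟨_, commutator_inr_inl_mem_cr2Id g h⟩ : T11crId G H))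
    fun h₁ h₂ => (mk_eq_mk_of_mul_inv_mem_sup <| by
      simpa [mul_assoc] using Subgroup.mem_sup_right (commutator_inr_mul_mem_N2g g h₁ h₂)).trans
      (QuotientGroup.mk_mul _ _ _)

lemma mk_elt19_add_one (g : G) (h : H) (n : ℤ) :
    (QuotientGroup.mk ⟨_, elt19_mem G H g h (n + 1)⟩ : T11crId G H) =
      QuotientGroup.mk ⟨_, elt19_mem G H g h n⟩ * t11CommutatorHom g h ^ n := by
  let killed : cr2Id G H := ⟨_, commutator_inl_commutator_mem_cr2Id (g ^ n) g (h ^ n)⟩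
  have hsplit : (⟨_, elt19_mem G H g h (n + 1)⟩ : cr2Id G H) =
      ⟨_, elt19_mem G H g h n⟩ * killed * ⟨_, commutator_inr_inl_mem_cr2Id g (h ^ n)⟩ :=
    Subtype.ext <| by
      simp only [killed, Subgroup.coe_mul, map_zpow]
      exact mul_zpow_add_one_mul_zpow_neg _ _ n
  rw [hsplit, QuotientGroup.mk_mul, QuotientGroup.mk_mul,
    mk_eq_one_of_mem_sup (z := killed)
      (Subgroup.mem_sup_left (commutator_inl_commutator_mem_N1g _ _ _)),
    mul_one, ← map_zpow (t11CommutatorHom g) h n]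
  rfl

end

theorem statement19 (G H : Type u) [Group G] [Group H] (g : G) (h : H) (n : ℤ) :
    (QuotientGroup.mk
        (⟨((Coprod.inl g : Coprod G H) * Coprod.inr h) ^ n *
            (Coprod.inr h : Coprod G H) ^ (-n) * (Coprod.inl g : Coprod G H) ^ (-n),
          elt19_mem G H g h n⟩ : cr2Id G H) : T11crId G H) =
      QuotientGroup.mk
        (⟨⁅(Coprod.inr h : Coprod G H), Coprod.inl g⁆ ^ ((n * (n - 1)) / 2),
          comm_zpow_mem G H g h ((n * (n - 1)) / 2)⟩ : cr2Id G H) := by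
  have h₀ : (QuotientGroup.mk ⟨_, elt19_mem G H g h 0⟩ : T11crId G H) = 1 :=
    mk_eq_one_of_mem_sup (by simp)
  have hw := eq_zpow_mul_sub_one_div_two (t11CommutatorHom g h)
    (f := fun k => QuotientGroup.mk ⟨_, elt19_mem G H g h k⟩) h₀ (mk_elt19_add_one g h) n
  exact hw.trans (QuotientGroup.mk_zpow _ _ _).symm

end FreeProducts

end QF
end
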